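/- arXiv:1412.7817 — 10 statements merged into one kernel-verified Lean document; each statement's English description precedes it below -/
import Mathlib

section
/- (Cartan uniqueness theorem for homogeneous varieties.) Let d be a positive integer, let V and W be nonempty homogeneous varieties in the open unit ball B_d of C^d, and let F, G : B_d → C^d be holomorphic maps such that F(V) = W, F(0) = 0, G ∘ F restricted to V is the identity of V, and F ∘ G restricted to W is the identity of W. Then there exists a linear map A : C^d → C^d such that A(z) = F(z) for every z ∈ V. -/
/-!
Restrict `F` to the complex line through a point `z` of `V`: the homogeneous variety
contains the whole disc of that line inside the ball, so the Schwarz lemma gives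
`‖F z‖ ≤ ‖z‖`, and likewise `‖G w‖ ≤ ‖w‖` on `W`. Since `G (F z) = z`, equality
`‖F z‖ = ‖z‖` holds on `V`, and the equality case of the Schwarz lemma makes `F` linear on
each such line, with slope given by the derivative of `F` at the origin. Hence `F` agrees
with `fderiv ℂ F 0` on `V`.
-/

open Metric

/-- `V` is a homogeneous variety in the open unit ball of `ℂ^d`: the common zero set in the
ball of a set of homogeneous polynomials. -/
def IsHomogeneousVariety (d : ℕ) (V : Set (EuclideanSpace ℂ (Fin d))) : Prop :=
  ∃ S : Set (MvPolynomial (Fin d) ℂ),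
    (∀ p ∈ S, ∃ n : ℕ, p.IsHomogeneous n) ∧
    V = {z : EuclideanSpace ℂ (Fin d) |
          z ∈ ball (0 : EuclideanSpace ℂ (Fin d)) 1 ∧
          ∀ p ∈ S, MvPolynomial.eval (fun i => z i) p = 0}

open Set

namespace MvPolynomial.IsHomogeneous

lemma eval_smul {σ R : Type*} [CommSemiring R] {φ : MvPolynomial σ R} {n : ℕ}
    (hφ : φ.IsHomogeneous n) (t : R) (x : σ → R) :
    eval (t • x) φ = t ^ n * eval x φ := by
  rw [eval_eq, eval_eq, Finset.mul_sum]
  refine Finset.sum_congr rfl fun s hs => ?_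
  simp only [Pi.smul_apply, smul_eq_mul, mul_pow, Finset.prod_mul_distrib,
    Finset.prod_pow_eq_pow_sum, ← hφ.degree_eq_sum_deg_support hs]
  ring

end MvPolynomial.IsHomogeneous

lemma one_mem_ball_zero_inv {r : ℝ} (h0 : 0 < r) (h1 : r < 1) :
    (1 : ℂ) ∈ ball (0 : ℂ) r⁻¹ := by
  simpa [one_lt_inv₀ h0] using h1

section SchwarzOnLines

variable {E F : Type*} [NormedAddCommGroup E] [NormedSpace ℂ E]
  [NormedAddCommGroup F] [NormedSpace ℂ F] {f : E → F} {z : E}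

lemma smul_mem_ball_one_of_mem_ball_inv_norm {μ : ℂ} (hμ : μ ∈ ball (0 : ℂ) ‖z‖⁻¹) :
    μ • z ∈ ball (0 : E) 1 := by
  rcases eq_or_ne z 0 with rfl | hz
  · simp
  rw [mem_ball_zero_iff] at hμ ⊢
  calc ‖μ • z‖ = ‖μ‖ * ‖z‖ := norm_smul μ z
    _ < ‖z‖⁻¹ * ‖z‖ := by gcongr
    _ = 1 := inv_mul_cancel₀ (norm_ne_zero_iff.mpr hz)

lemma differentiableOn_comp_smul_ball_inv_norm (hf : DifferentiableOn ℂ f (ball 0 1)) :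
    DifferentiableOn ℂ (fun μ : ℂ => f (μ • z)) (ball 0 ‖z‖⁻¹) :=
  hf.comp (by fun_prop) fun _ => smul_mem_ball_one_of_mem_ball_inv_norm

lemma norm_apply_le_of_mapsTo_line (hf : DifferentiableOn ℂ f (ball 0 1)) (hf0 : f 0 = 0)
    (hmaps : MapsTo (fun μ : ℂ => f (μ • z)) (ball 0 ‖z‖⁻¹) (ball 0 1))
    (hz : ‖z‖ < 1) :
    ‖f z‖ ≤ ‖z‖ := by
  rcases eq_or_ne z 0 with rfl | hz0
  · simp [hf0]
  have hmaps' : MapsTo (fun μ : ℂ => f (μ • z)) (ball 0 ‖z‖⁻¹)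
      (closedBall (f ((0 : ℂ) • z)) 1) := by
    simpa [hf0] using hmaps.mono_right ball_subset_closedBall
  simpa [hf0] using Complex.dist_le_div_mul_dist_of_mapsTo_ball
    (differentiableOn_comp_smul_ball_inv_norm hf) hmaps'
    (one_mem_ball_zero_inv (norm_pos_iff.mpr hz0) hz)

lemma apply_eq_fderiv_of_mapsTo_line_of_norm_eq [StrictConvexSpace ℝ F]
    (hf : DifferentiableOn ℂ f (ball 0 1)) (hf0 : f 0 = 0)
    (hmaps : MapsTo (fun μ : ℂ => f (μ • z)) (ball 0 ‖z‖⁻¹) (ball 0 1))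
    (hz : ‖z‖ < 1)
    (heq : ‖f z‖ = ‖z‖) :
    f z = fderiv ℂ f 0 z := by
  rcases eq_or_ne z 0 with rfl | hz0
  · simp [hf0]
  have hz1 : (1 : ℂ) ∈ ball 0 ‖z‖⁻¹ := one_mem_ball_zero_inv (norm_pos_iff.mpr hz0) hz
  have hmaps' : MapsTo (fun μ : ℂ => f (μ • z)) (ball 0 ‖z‖⁻¹)
      (closedBall (f ((0 : ℂ) • z)) 1) := by
    simpa [hf0] using hmaps.mono_right ball_subset_closedBall
  set c := dslope (fun μ : ℂ => f (μ • z)) 0 1 with hc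
  have hc_eq : c = f z := by simp [hc, dslope_of_ne, slope_def_module, hf0]
  have hline : EqOn (fun μ : ℂ => f (μ • z)) (fun μ => μ • c) (ball 0 ‖z‖⁻¹) :=
    fun μ hμ => by
      simpa [hf0] using Complex.affine_of_mapsTo_ball_of_norm_dslope_eq_div
        (differentiableOn_comp_smul_ball_inv_norm hf) hmaps' hz1
        (by rw [← hc, hc_eq, heq, one_div, inv_inv]) hμ
  have hderiv_line : HasDerivAt (fun μ : ℂ => f (μ • z)) c 0 := by
    have hnhds : ball (0 : ℂ) ‖z‖⁻¹ ∈ nhds 0 := ball_mem_nhds 0 (by positivity)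
    simpa using ((hasDerivAt_id (0 : ℂ)).smul_const c).congr_of_eventuallyEq
      (hline.eventuallyEq_of_mem hnhds)
  have hderiv_chain : HasDerivAt (fun μ : ℂ => f (μ • z)) (fderiv ℂ f 0 z) 0 := by
    have hfd : HasFDerivAt f (fderiv ℂ f 0) ((0 : ℂ) • z) := by
      rw [zero_smul]
      exact (hf.differentiableAt (ball_mem_nhds 0 one_pos)).hasFDerivAt
    simpa [Function.comp_def] using
      hfd.comp_hasDerivAt (0 : ℂ) ((hasDerivAt_id (0 : ℂ)).smul_const z)
  rw [← hc_eq]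
  exact hderiv_line.unique hderiv_chain

end SchwarzOnLines

section BallCone

variable {E F : Type*} [NormedAddCommGroup E] [NormedSpace ℂ E]
  [NormedAddCommGroup F] [NormedSpace ℂ F] {V : Set E} {f : E → F} {z : E}

def IsBallCone (V : Set E) : Prop :=
  V ⊆ ball 0 1 ∧ ∀ z ∈ V, ∀ t : ℂ, t • z ∈ ball (0 : E) 1 → t • z ∈ V

lemma IsBallCone.zero_mem (hV : IsBallCone V) (hne : V.Nonempty) : (0 : E) ∈ V := by
  obtain ⟨z, hz⟩ := hne
  simpa using hV.2 z hz 0 (by simp)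

lemma IsBallCone.mapsTo_line (hV : IsBallCone V) (hz : z ∈ V) :
    MapsTo (fun μ : ℂ => μ • z) (ball 0 ‖z‖⁻¹) V :=
  fun _ hμ => hV.2 z hz _ (smul_mem_ball_one_of_mem_ball_inv_norm hμ)

lemma IsBallCone.norm_apply_le (hV : IsBallCone V) (hf : DifferentiableOn ℂ f (ball 0 1))
    (hf0 : f 0 = 0) (hfV : MapsTo f V (ball 0 1)) (hz : z ∈ V) : ‖f z‖ ≤ ‖z‖ :=
  norm_apply_le_of_mapsTo_line hf hf0 (hfV.comp (hV.mapsTo_line hz))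
    (mem_ball_zero_iff.mp (hV.1 hz))

lemma IsBallCone.apply_eq_fderiv_of_norm_eq [StrictConvexSpace ℝ F] (hV : IsBallCone V)
    (hf : DifferentiableOn ℂ f (ball 0 1)) (hf0 : f 0 = 0) (hfV : MapsTo f V (ball 0 1))
    (hz : z ∈ V) (heq : ‖f z‖ = ‖z‖) : f z = fderiv ℂ f 0 z :=
  apply_eq_fderiv_of_mapsTo_line_of_norm_eq hf hf0 (hfV.comp (hV.mapsTo_line hz))
    (mem_ball_zero_iff.mp (hV.1 hz)) heq

end BallCone

lemma IsHomogeneousVariety.isBallCone {d : ℕ} {V : Set (EuclideanSpace ℂ (Fin d))}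
    (hV : IsHomogeneousVariety d V) : IsBallCone V := by
  obtain ⟨S, hS, rfl⟩ := hV
  refine ⟨fun z hz => hz.1, fun z hz t ht => ⟨ht, fun p hp => ?_⟩⟩
  obtain ⟨n, hn⟩ := hS p hp
  have hsmul : (fun i => (t • z) i) = t • fun i => z i := rfl
  rw [hsmul, hn.eval_smul, hz.2 p hp, mul_zero]

theorem cartan_uniqueness_homogeneous_general (d : ℕ)
    (V W : Set (EuclideanSpace ℂ (Fin d))) (hV : IsHomogeneousVariety d V)
    (hW : IsHomogeneousVariety d W)
    (F G : EuclideanSpace ℂ (Fin d) → EuclideanSpace ℂ (Fin d))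
    (hF : DifferentiableOn ℂ F (ball 0 1)) (hG : DifferentiableOn ℂ G (ball 0 1))
    (hFV : F '' V = W) (hF0 : F 0 = 0)
    (hGF : ∀ z ∈ V, G (F z) = z) :
    ∃ A : EuclideanSpace ℂ (Fin d) →ₗ[ℂ] EuclideanSpace ℂ (Fin d), ∀ z ∈ V, A z = F z := by
  have hVc := hV.isBallCone
  have hWc := hW.isBallCone
  have hFmaps : MapsTo F V W := hFV ▸ mapsTo_image F V
  have hGmaps : MapsTo G W (ball 0 1) := by
    rw [← hFV]
    rintro _ ⟨z, hz, rfl⟩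
    rw [hGF z hz]
    exact hVc.1 hz
  refine ⟨fderiv ℂ F 0, fun z hz => ?_⟩
  have hG0 : G 0 = 0 := by simpa [hF0] using hGF 0 (hVc.zero_mem ⟨z, hz⟩)
  have hnorm : ‖F z‖ = ‖z‖ := by
    refine le_antisymm (hVc.norm_apply_le hF hF0 (hFmaps.mono_right hWc.1) hz) ?_
    calc ‖z‖ = ‖G (F z)‖ := by rw [hGF z hz]
      _ ≤ ‖F z‖ := hWc.norm_apply_le hG hG0 hGmaps (hFmaps hz)
  exact (hVc.apply_eq_fderiv_of_norm_eq hF hF0 (hFmaps.mono_right hWc.1) hz hnorm).symm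

/-- Cartan uniqueness theorem for homogeneous varieties: a zero-preserving biholomorphism
between nonempty homogeneous varieties in the finite-dimensional unit ball agrees with a
linear map on the variety. -/
theorem cartan_uniqueness_homogeneous (d : ℕ) (hd : 0 < d)
    (V W : Set (EuclideanSpace ℂ (Fin d))) (hV : IsHomogeneousVariety d V)
    (hW : IsHomogeneousVariety d W) (hVne : V.Nonempty) (hWne : W.Nonempty)
    (F G : EuclideanSpace ℂ (Fin d) → EuclideanSpace ℂ (Fin d))
    (hF : DifferentiableOn ℂ F (ball 0 1)) (hG : DifferentiableOn ℂ G (ball 0 1))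
    (hFV : F '' V = W) (hF0 : F 0 = 0)
    (hGF : ∀ z ∈ V, G (F z) = z) (hFG : ∀ w ∈ W, F (G w) = w) :
    ∃ A : EuclideanSpace ℂ (Fin d) →ₗ[ℂ] EuclideanSpace ℂ (Fin d), ∀ z ∈ V, A z = F z :=
  cartan_uniqueness_homogeneous_general d V W hV hW F G hF hG hFV hF0 hGF
end

section
/- Let H be a complex Hilbert space with inner product ⟨·,·⟩ linear in the first variable, and let B be its open unit ball. For ν ∈ B define s_ν = (1 − ‖ν‖²)^{1/2}, P_ν z = (⟨z,ν⟩/⟨ν,ν⟩)ν for ν ≠ 0 and P_0 = 0, Q_ν = I − P_ν, and Φ_ν(z) = (ν − P_ν z − s_ν Q_ν z)/(1 − ⟨z,ν⟩). Then the function d_ph(μ,ν) := ‖Φ_ν(μ)‖ defines a metric on B; in particular d_ph is symmetric, i.e., ‖Φ_ν(μ)‖ = ‖Φ_μ(ν)‖ for all μ, ν ∈ B, it vanishes exactly when μ = ν, and it satisfies the triangle inequality. -/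
open Metric

noncomputable section

open scoped Classical

variable {H : Type*} [NormedAddCommGroup H] [InnerProductSpace ℂ H]

/-- The projection `P_ν z = (⟨z,ν⟩/⟨ν,ν⟩)ν` (with the paper's inner product `⟨z,ν⟩`,
linear in the first variable, which is `⟪ν, z⟫_ℂ` in Mathlib's convention), and `P_0 = 0`. -/
def ballProj (ν z : H) : H :=
  if ν = 0 then 0 else ((inner ℂ ν z : ℂ) / (inner ℂ ν ν : ℂ)) • ν

/-- The Möbius map `Φ_ν(z) = (ν − P_ν z − s_ν Q_ν z)/(1 − ⟨z,ν⟩)` of the open unit ball of a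
complex Hilbert space, exchanging `ν` and `0`, where `s_ν = (1 − ‖ν‖²)^{1/2}` and
`Q_ν = I − P_ν`. -/
def ballMobius (ν z : H) : H :=
  (1 - (inner ℂ ν z : ℂ))⁻¹ •
    (ν - ballProj ν z - (Real.sqrt (1 - ‖ν‖ ^ 2) : ℂ) • (z - ballProj ν z))

/-- The pseudohyperbolic distance `d_ph(μ,ν) = ‖Φ_ν(μ)‖`. -/
def pseudohyperbolicDist (μ ν : H) : ℝ := ‖ballMobius ν μ‖

/-! The Möbius map satisfies
`1 - ⟪Φ_ν μ, Φ_ν λ⟫ = (1 - ‖ν‖²)(1 - ⟪μ, λ⟫) / ((1 - ⟪μ, ν⟫)(1 - ⟪ν, λ⟫))`,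
hence `1 - d(μ, ν)² = (1 - ‖μ‖²)(1 - ‖ν‖²) / |1 - ⟪ν, μ⟫|²`. This closed form is symmetric,
equals `1` only on the diagonal, and shows that every `Φ_ν` preserves `d`. Moving `ν` to `0`
by `Φ_ν` reduces the triangle inequality to `d(x, y) ≤ ‖x‖ + ‖y‖`, which follows from
`|1 - ⟪y, x⟫| ≤ 1 + ‖x‖ ‖y‖`. -/

open scoped InnerProductSpace ComplexConjugate

section RCLike

variable {𝕜 E : Type*} [RCLike 𝕜] [NormedAddCommGroup E] [InnerProductSpace 𝕜 E]

lemma norm_one_sub_inner_comm (x y : E) : ‖1 - ⟪x, y⟫_𝕜‖ = ‖1 - ⟪y, x⟫_𝕜‖ := by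
  rw [← RCLike.norm_conj, map_sub, map_one, inner_conj_symm]

lemma one_sub_inner_ne_zero {x y : E} (hx : ‖x‖ < 1) (hy : ‖y‖ < 1) : 1 - ⟪x, y⟫_𝕜 ≠ 0 := by
  refine sub_ne_zero.mpr fun h ↦ ?_
  have := norm_inner_le_norm (𝕜 := 𝕜) x y
  rw [← h, norm_one] at this
  nlinarith [norm_nonneg x, norm_nonneg y]

lemma mul_one_sub_sq_lt_norm_one_sub_inner_sq {x y : E} (hx : ‖x‖ ≤ 1) (hy : ‖y‖ ≤ 1)
    (hne : x ≠ y) : (1 - ‖x‖ ^ 2) * (1 - ‖y‖ ^ 2) < ‖1 - ⟪y, x⟫_𝕜‖ ^ 2 := by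
  set r := RCLike.re ⟪y, x⟫_𝕜
  have hr : r ≤ ‖y‖ * ‖x‖ := (RCLike.re_le_norm _).trans (norm_inner_le_norm y x)
  have hre : (1 - r) ^ 2 ≤ ‖1 - ⟪y, x⟫_𝕜‖ ^ 2 := by
    have := RCLike.abs_re_le_norm (1 - ⟪y, x⟫_𝕜)
    rw [map_sub, RCLike.one_re] at this
    exact sq_le_sq.mpr (by simpa [abs_of_nonneg (norm_nonneg _)] using this)
  have hdist : 0 < ‖y‖ ^ 2 - 2 * r + ‖x‖ ^ 2 := by
    rw [← norm_sub_sq (𝕜 := 𝕜)]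
    exact pow_pos (norm_pos_iff.mpr (sub_ne_zero.mpr hne.symm)) 2
  have hxy : ‖y‖ * ‖x‖ ≤ 1 := mul_le_one₀ hy (norm_nonneg x) hx
  -- with `p = ‖x‖‖y‖ - r ≥ 0`:
  -- `(1 - r)² - (1 - ‖x‖²)(1 - ‖y‖²) = 2p(1 - ‖x‖‖y‖) + p² + (‖x‖ - ‖y‖)²`
  have hpos : 0 < (‖y‖ * ‖x‖ - r) ^ 2 + (‖x‖ - ‖y‖) ^ 2 := by
    rcases hr.lt_or_eq with hlt | heq
    · nlinarith [sq_nonneg (‖x‖ - ‖y‖)]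
    · rw [heq] at hdist ⊢
      nlinarith
  nlinarith [mul_nonneg (sub_nonneg.mpr hr) (sub_nonneg.mpr hxy)]

end RCLike

lemma one_sub_inner_ballMobius {ν μ lam : H} (hν : ‖ν‖ ≤ 1) (hνμ : 1 - ⟪ν, μ⟫_ℂ ≠ 0)
    (hνlam : 1 - ⟪ν, lam⟫_ℂ ≠ 0) :
    1 - ⟪ballMobius ν μ, ballMobius ν lam⟫_ℂ
      = (1 - (‖ν‖ : ℂ) ^ 2) * (1 - ⟪μ, lam⟫_ℂ) / ((1 - ⟪μ, ν⟫_ℂ) * (1 - ⟪ν, lam⟫_ℂ)) := by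
  have hμν : 1 - ⟪μ, ν⟫_ℂ ≠ 0 := by
    rwa [← inner_conj_symm, ← map_one (starRingEnd ℂ), ← map_sub, map_ne_zero]
  have hs : ((√(1 - ‖ν‖ ^ 2) : ℝ) : ℂ) ^ 2 = 1 - (‖ν‖ : ℂ) ^ 2 := by
    rw [← Complex.ofReal_pow, Real.sq_sqrt (by nlinarith [norm_nonneg ν])]
    push_cast; ring
  rw [eq_div_iff (mul_ne_zero hμν hνlam)]
  by_cases h0 : ν = 0
  · simp [ballMobius, ballProj, h0]
  simp only [ballMobius, ballProj, if_neg h0, inner_smul_left, inner_smul_right, inner_sub_left,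
    inner_sub_right, map_inv₀, map_sub, map_one, map_div₀, map_pow, inner_conj_symm,
    Complex.conj_ofReal, inner_self_eq_norm_sq_to_K, RCLike.ofReal_eq_complex_ofReal]
  have hn : (‖ν‖ : ℂ) ≠ 0 := by simpa using h0
  generalize ((√(1 - ‖ν‖ ^ 2) : ℝ) : ℂ) = s at hs ⊢
  field_simp
  linear_combination (⟪μ, ν⟫_ℂ * ⟪ν, lam⟫_ℂ - (‖ν‖ : ℂ) ^ 2 * ⟪μ, lam⟫_ℂ) * hs

lemma one_sub_norm_ballMobius_sq {ν μ : H} (hν : ‖ν‖ ≤ 1) (hνμ : 1 - ⟪ν, μ⟫_ℂ ≠ 0) :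
    1 - ‖ballMobius ν μ‖ ^ 2 = (1 - ‖μ‖ ^ 2) * (1 - ‖ν‖ ^ 2) / ‖1 - ⟪ν, μ⟫_ℂ‖ ^ 2 := by
  have h := one_sub_inner_ballMobius hν hνμ hνμ
  have hconj : (1 - ⟪μ, ν⟫_ℂ) * (1 - ⟪ν, μ⟫_ℂ) = (‖1 - ⟪ν, μ⟫_ℂ‖ : ℂ) ^ 2 := by
    rw [← Complex.conj_mul', map_sub, map_one, inner_conj_symm]
  rw [inner_self_eq_norm_sq_to_K, inner_self_eq_norm_sq_to_K, hconj, mul_comm] at h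
  apply Complex.ofReal_injective
  push_cast
  exact h

lemma ballMobius_self (ν : H) : ballMobius ν ν = 0 := by
  by_cases h0 : ν = 0
  · simp [ballMobius, ballProj, h0]
  have hproj : ballProj ν ν = ν := by
    rw [ballProj, if_neg h0, div_self (inner_self_ne_zero.mpr h0), one_smul]
  simp [ballMobius, hproj]

section Ball

variable {μ ν lam : H}

lemma pseudohyperbolicDist_lt_one (hμ : ‖μ‖ < 1) (hν : ‖ν‖ < 1) :
    pseudohyperbolicDist μ ν < 1 := by
  have h := one_sub_norm_ballMobius_sq hν.le (one_sub_inner_ne_zero hν hμ)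
  have hpos : 0 < (1 - ‖μ‖ ^ 2) * (1 - ‖ν‖ ^ 2) / ‖1 - ⟪ν, μ⟫_ℂ‖ ^ 2 := by
    have := norm_pos_iff.mpr (one_sub_inner_ne_zero (𝕜 := ℂ) hν hμ)
    have := sq_lt_one_iff₀ (norm_nonneg μ) |>.mpr hμ
    have := sq_lt_one_iff₀ (norm_nonneg ν) |>.mpr hν
    apply div_pos <;> nlinarith
  exact (sq_lt_one_iff₀ (norm_nonneg _)).mp (by linarith)

lemma pseudohyperbolicDist_comm (hμ : ‖μ‖ < 1) (hν : ‖ν‖ < 1) :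
    pseudohyperbolicDist μ ν = pseudohyperbolicDist ν μ := by
  have h₁ := one_sub_norm_ballMobius_sq hν.le (one_sub_inner_ne_zero hν hμ)
  have h₂ := one_sub_norm_ballMobius_sq hμ.le (one_sub_inner_ne_zero hμ hν)
  rw [norm_one_sub_inner_comm, mul_comm] at h₂
  exact (pow_left_inj₀ (norm_nonneg _) (norm_nonneg _) two_ne_zero).mp (by linarith)

lemma pseudohyperbolicDist_eq_zero_iff (hμ : ‖μ‖ < 1) (hν : ‖ν‖ < 1) :
    pseudohyperbolicDist μ ν = 0 ↔ μ = ν := by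
  refine ⟨fun h ↦ ?_, fun h ↦ by rw [h, pseudohyperbolicDist, ballMobius_self, norm_zero]⟩
  by_contra hne
  have h₁ := one_sub_norm_ballMobius_sq hν.le (one_sub_inner_ne_zero hν hμ)
  have hD := norm_pos_iff.mpr (one_sub_inner_ne_zero (𝕜 := ℂ) hν hμ)
  rw [← pseudohyperbolicDist, h, eq_div_iff (by positivity)] at h₁
  linarith [mul_one_sub_sq_lt_norm_one_sub_inner_sq (𝕜 := ℂ) hμ.le hν.le hne]

lemma pseudohyperbolicDist_ballMobius (hμ : ‖μ‖ < 1) (hν : ‖ν‖ < 1) (hlam : ‖lam‖ < 1) :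
    pseudohyperbolicDist (ballMobius ν μ) (ballMobius ν lam) = pseudohyperbolicDist μ lam := by
  have hνμ := one_sub_inner_ne_zero (𝕜 := ℂ) hν hμ
  have hνlam := one_sub_inner_ne_zero (𝕜 := ℂ) hν hlam
  have hx := one_sub_norm_ballMobius_sq hν.le hνμ
  have hy := one_sub_norm_ballMobius_sq hν.le hνlam
  have hxy := congrArg norm (one_sub_inner_ballMobius hν.le hνlam hνμ)
  have hνsq : ‖1 - (‖ν‖ : ℂ) ^ 2‖ = 1 - ‖ν‖ ^ 2 := by
    rw [← Complex.ofReal_pow, ← Complex.ofReal_one, ← Complex.ofReal_sub, Complex.norm_real,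
      Real.norm_of_nonneg (by nlinarith [norm_nonneg ν])]
  rw [norm_div, norm_mul, norm_mul, hνsq, norm_one_sub_inner_comm lam ν] at hxy
  have hx₁ := pseudohyperbolicDist_lt_one hμ hν
  have hy₁ := pseudohyperbolicDist_lt_one hlam hν
  have hd := one_sub_norm_ballMobius_sq hy₁.le (one_sub_inner_ne_zero hy₁ hx₁)
  have hd' := one_sub_norm_ballMobius_sq hlam.le (one_sub_inner_ne_zero (𝕜 := ℂ) hlam hμ)
  rw [hx, hy, hxy] at hd
  have hA := norm_ne_zero_iff.mpr hνμ
  have hB := norm_ne_zero_iff.mpr hνlam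
  have hC := norm_ne_zero_iff.mpr (one_sub_inner_ne_zero (𝕜 := ℂ) hlam hμ)
  have hν' : 1 - ‖ν‖ ^ 2 ≠ 0 := by nlinarith [norm_nonneg ν]
  have hrhs : (1 - ‖μ‖ ^ 2) * (1 - ‖ν‖ ^ 2) / ‖1 - ⟪ν, μ⟫_ℂ‖ ^ 2
        * ((1 - ‖lam‖ ^ 2) * (1 - ‖ν‖ ^ 2) / ‖1 - ⟪ν, lam⟫_ℂ‖ ^ 2)
        / ((1 - ‖ν‖ ^ 2) * ‖1 - ⟪lam, μ⟫_ℂ‖ / (‖1 - ⟪ν, lam⟫_ℂ‖ * ‖1 - ⟪ν, μ⟫_ℂ‖)) ^ 2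
      = (1 - ‖μ‖ ^ 2) * (1 - ‖lam‖ ^ 2) / ‖1 - ⟪lam, μ⟫_ℂ‖ ^ 2 := by
    field_simp
  refine (pow_left_inj₀ (norm_nonneg _) (norm_nonneg _) two_ne_zero).mp ?_
  linarith

lemma pseudohyperbolicDist_le_norm_add_norm (hμ : ‖μ‖ < 1) (hν : ‖ν‖ < 1) :
    pseudohyperbolicDist μ ν ≤ ‖μ‖ + ‖ν‖ := by
  have h := one_sub_norm_ballMobius_sq hν.le (one_sub_inner_ne_zero hν hμ)
  have hD := norm_pos_iff.mpr (one_sub_inner_ne_zero (𝕜 := ℂ) hν hμ)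
  have hDle : ‖1 - ⟪ν, μ⟫_ℂ‖ ≤ 1 + ‖μ‖ * ‖ν‖ := by
    grw [norm_sub_le, norm_one, norm_inner_le_norm, mul_comm]
  have hμ0 := norm_nonneg μ
  have hν0 := norm_nonneg ν
  have hdiv : (1 - ‖μ‖ ^ 2) * (1 - ‖ν‖ ^ 2) / (1 + ‖μ‖ * ‖ν‖) ^ 2
      ≤ (1 - ‖μ‖ ^ 2) * (1 - ‖ν‖ ^ 2) / ‖1 - ⟪ν, μ⟫_ℂ‖ ^ 2 := by
    gcongr
    exact mul_nonneg (by nlinarith) (by nlinarith)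
  have hkey : 1 - (‖μ‖ + ‖ν‖) ^ 2 ≤ (1 - ‖μ‖ ^ 2) * (1 - ‖ν‖ ^ 2) / (1 + ‖μ‖ * ‖ν‖) ^ 2 := by
    rw [le_div_iff₀ (by positivity)]
    have hab : 0 ≤ ‖μ‖ * ‖ν‖ * (2 + ‖μ‖ * ‖ν‖) := by positivity
    nlinarith [mul_nonneg (sq_nonneg (‖μ‖ + ‖ν‖)) hab]
  exact (pow_le_pow_iff_left₀ (norm_nonneg _) (by positivity) two_ne_zero).mp (by linarith)

end Ball

/-- The pseudohyperbolic distance is a metric on the open unit ball of a complex Hilbert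
space: it is symmetric, vanishes exactly on the diagonal, and satisfies the triangle
inequality. -/
theorem pseudohyperbolicDist_isMetric :
    ∀ μ ∈ ball (0 : H) 1, ∀ ν ∈ ball (0 : H) 1,
      pseudohyperbolicDist μ ν = pseudohyperbolicDist ν μ ∧
      (pseudohyperbolicDist μ ν = 0 ↔ μ = ν) ∧
      ∀ lam ∈ ball (0 : H) 1,
        pseudohyperbolicDist μ lam ≤ pseudohyperbolicDist μ ν + pseudohyperbolicDist ν lam := by
  intro μ hμ ν hν
  rw [mem_ball_zero_iff] at hμ hν
  refine ⟨pseudohyperbolicDist_comm hμ hν, pseudohyperbolicDist_eq_zero_iff hμ hν,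
    fun lam hlam ↦ ?_⟩
  rw [mem_ball_zero_iff] at hlam
  calc pseudohyperbolicDist μ lam
      = pseudohyperbolicDist (ballMobius ν μ) (ballMobius ν lam) :=
        (pseudohyperbolicDist_ballMobius hμ hν hlam).symm
    _ ≤ pseudohyperbolicDist μ ν + pseudohyperbolicDist lam ν :=
        pseudohyperbolicDist_le_norm_add_norm (pseudohyperbolicDist_lt_one hμ hν)
          (pseudohyperbolicDist_lt_one hlam hν)
    _ = pseudohyperbolicDist μ ν + pseudohyperbolicDist ν lam := by
        rw [pseudohyperbolicDist_comm hlam hν]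

end
end

section
/- Let (b_n)_{n≥1} be a complex sequence with Σ_{n≥1} |b_n|² = 1 and b_1 ≠ 0, and define G : D → ℓ² by G(z) = (b_1 z, b_2 z², b_3 z³, ...). Then G is an injective map from the open unit disc D into the open unit ball B_∞ of ℓ², its inverse on G(D) is given by z ↦ z_1/b_1, and G(D) = {z ∈ B_∞ : b_n z_1^n = b_1^n z_n for all n ≥ 2}. -/
open Metric

/-!
Writing `z = x₁ / b₁`, the relations `b_n x₁ⁿ = b₁ⁿ x_n` say exactly that `x_n = b_n zⁿ` for all
`n`. Comparing coordinates, such an `x ∈ ℓ²` has `‖x‖ ≤ |z| ‖b‖` when `|z| ≤ 1` and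
`‖x‖ ≥ ‖b‖` when `|z| ≥ 1`; as `‖b‖ = 1`, it lies in `B_∞` exactly when `z ∈ D`.
-/

open scoped ENNReal

lemma memℓp_two_iff_summable_sq {α : Type*} {E : α → Type*} [∀ i, NormedAddCommGroup (E i)]
    {f : ∀ i, E i} : Memℓp f 2 ↔ Summable fun i => ‖f i‖ ^ 2 := by
  simpa using memℓp_gen_iff (p := 2) (by norm_num)

lemma lp.norm_sq_eq_tsum_sq {α : Type*} {E : α → Type*} [∀ i, NormedAddCommGroup (E i)]
    (f : lp E 2) : ‖f‖ ^ 2 = ∑' i, ‖f i‖ ^ 2 := by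
  simpa using lp.norm_rpow_eq_tsum (p := 2) (by norm_num) f

section WeightedPowers

variable {𝕜 : Type*} [NormedField 𝕜] {p : ℝ≥0∞}

lemma Memℓp.mul_pow_succ {c : ℕ → 𝕜} (hc : Memℓp c p) {z : 𝕜} (hz : ‖z‖ ≤ 1) :
    Memℓp (fun n => c n * z ^ (n + 1)) p :=
  hc.mono' fun n => by
    rw [norm_mul, norm_pow]
    exact mul_le_of_le_one_right (norm_nonneg _) (pow_le_one₀ (norm_nonneg _) hz)

noncomputable def weightedPowers (c : lp (fun _ : ℕ => 𝕜) p) (z : 𝕜) : lp (fun _ : ℕ => 𝕜) p :=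
  if hz : ‖z‖ ≤ 1 then ⟨fun n => c n * z ^ (n + 1), (lp.memℓp c).mul_pow_succ hz⟩ else 0

lemma weightedPowers_apply (c : lp (fun _ : ℕ => 𝕜) p) {z : 𝕜} (hz : ‖z‖ ≤ 1) (n : ℕ) :
    weightedPowers c z n = c n * z ^ (n + 1) := by
  simp [weightedPowers, hz]

variable [Fact (1 ≤ p)]

lemma norm_le_mul_norm_of_apply_eq_mul_pow_succ {x c : lp (fun _ : ℕ => 𝕜) p} {z : 𝕜}
    (hz : ‖z‖ ≤ 1) (hx : ∀ n, x n = c n * z ^ (n + 1)) : ‖x‖ ≤ ‖z‖ * ‖c‖ := by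
  rw [← norm_smul]
  refine lp.norm_mono (zero_lt_one.trans_le Fact.out).ne' fun n => ?_
  rw [hx, lp.coeFn_smul, Pi.smul_apply, norm_smul, norm_mul, norm_pow, mul_comm]
  exact mul_le_mul_of_nonneg_right (pow_le_of_le_one (norm_nonneg _) hz n.succ_ne_zero)
    (norm_nonneg _)

lemma norm_le_norm_of_apply_eq_mul_pow_succ {x c : lp (fun _ : ℕ => 𝕜) p} {z : 𝕜}
    (hz : 1 ≤ ‖z‖) (hx : ∀ n, x n = c n * z ^ (n + 1)) : ‖c‖ ≤ ‖x‖ := by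
  refine lp.norm_mono (zero_lt_one.trans_le Fact.out).ne' fun n => ?_
  rw [hx, norm_mul, norm_pow]
  exact le_mul_of_one_le_right (norm_nonneg _) (one_le_pow₀ hz)

lemma norm_lt_one_iff_of_apply_eq_mul_pow_succ {x c : lp (fun _ : ℕ => 𝕜) p} {z : 𝕜}
    (hc : ‖c‖ = 1) (hx : ∀ n, x n = c n * z ^ (n + 1)) : ‖x‖ < 1 ↔ ‖z‖ < 1 := by
  constructor
  · intro hx1
    by_contra! hz
    exact (hx1.trans_le (hc ▸ norm_le_norm_of_apply_eq_mul_pow_succ hz hx)).false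
  · intro hz
    calc ‖x‖ ≤ ‖z‖ * ‖c‖ := norm_le_mul_norm_of_apply_eq_mul_pow_succ hz.le hx
      _ < 1 := by rwa [hc, mul_one]

end WeightedPowers

lemma mul_pow_eq_pow_mul_iff {K : Type*} [Field K] {b x : ℕ → K} (hb1 : b 1 ≠ 0) :
    (∀ n, 2 ≤ n → b n * x 0 ^ n = b 1 ^ n * x (n - 1)) ↔
      ∀ n, x n = b (n + 1) * (x 0 / b 1) ^ (n + 1) := by
  constructor
  · rintro hrel (_ | m)
    · rw [zero_add, pow_one, mul_div_cancel₀ _ hb1]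
    · have h := hrel (m + 2) (by omega)
      rw [show m + 2 - 1 = m + 1 from rfl] at h
      rw [div_pow, mul_div_assoc', eq_div_iff (pow_ne_zero _ hb1)]
      linear_combination -h
  · intro hx n hn
    obtain ⟨m, rfl⟩ := Nat.exists_eq_add_of_le' hn
    rw [show m + 2 - 1 = m + 1 from rfl, hx (m + 1), div_pow, mul_div_assoc',
      mul_div_cancel₀ _ (pow_ne_zero _ hb1)]

/-- For a unit-norm `ℓ²` sequence `(b_n)_{n≥1}` with `b_1 ≠ 0` (here `b (n+1)` plays the
role of `b_{n+1}`, so the relevant values are `b 1, b 2, …`), the map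
`G(z) = (b_1 z, b_2 z², b_3 z³, …)` is a well-defined injective map of the open unit disc
into the open unit ball of `ℓ²`, with inverse `x ↦ x_1/b_1` on its image, and its image is
the variety `{x ∈ B_∞ : b_n x_1ⁿ = b_1ⁿ x_n for all n ≥ 2}` (the `n`-th coordinate `x_n`
of `x ∈ ℓ²` being `x (n-1)` in `0`-based indexing). -/
theorem embedded_disc_variety (b : ℕ → ℂ)
    (hb : HasSum (fun n : ℕ => ‖b (n + 1)‖ ^ 2) 1) (hb1 : b 1 ≠ 0) :
    ∃ G : ℂ → lp (fun _ : ℕ => ℂ) 2,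
      (∀ z ∈ ball (0 : ℂ) 1, ∀ n : ℕ, (G z) n = b (n + 1) * z ^ (n + 1)) ∧
      (∀ z ∈ ball (0 : ℂ) 1, ‖G z‖ < 1) ∧
      Set.InjOn G (ball (0 : ℂ) 1) ∧
      (∀ z ∈ ball (0 : ℂ) 1, (G z) 0 / b 1 = z) ∧
      G '' ball (0 : ℂ) 1 =
        {x : lp (fun _ : ℕ => ℂ) 2 | ‖x‖ < 1 ∧
          ∀ n : ℕ, 2 ≤ n → b n * (x 0) ^ n = (b 1) ^ n * x (n - 1)} := by
  let c : lp (fun _ : ℕ => ℂ) 2 :=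
    ⟨fun n => b (n + 1), memℓp_two_iff_summable_sq.2 hb.summable⟩
  have hc : ‖c‖ = 1 := by
    rw [← pow_eq_one_iff_of_nonneg (norm_nonneg c) two_ne_zero, lp.norm_sq_eq_tsum_sq]
    exact hb.tsum_eq
  have hG (z : ℂ) (hz : z ∈ ball (0 : ℂ) 1) (n : ℕ) :
      weightedPowers c z n = b (n + 1) * z ^ (n + 1) :=
    weightedPowers_apply c (mem_ball_zero_iff.1 hz).le n
  have hnorm (z : ℂ) (hz : z ∈ ball (0 : ℂ) 1) : ‖weightedPowers c z‖ < 1 :=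
    (norm_lt_one_iff_of_apply_eq_mul_pow_succ hc (hG z hz)).2 (mem_ball_zero_iff.1 hz)
  have hinv (z : ℂ) (hz : z ∈ ball (0 : ℂ) 1) : weightedPowers c z 0 / b 1 = z := by
    rw [hG z hz 0, zero_add, pow_one]
    field_simp
  refine ⟨weightedPowers c, hG, hnorm, Set.LeftInvOn.injOn (f₁' := fun x => x 0 / b 1) hinv,
    hinv, ?_⟩
  ext x
  constructor
  · rintro ⟨z, hz, rfl⟩
    refine ⟨hnorm z hz, (mul_pow_eq_pow_mul_iff hb1).2 fun n => ?_⟩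
    rw [hinv z hz, hG z hz]
  · rintro ⟨hx, hrel⟩
    have hxz := (mul_pow_eq_pow_mul_iff hb1).1 hrel
    have hz : x 0 / b 1 ∈ ball (0 : ℂ) 1 :=
      mem_ball_zero_iff.2 ((norm_lt_one_iff_of_apply_eq_mul_pow_succ hc hxz).1 hx)
    exact ⟨x 0 / b 1, hz, lp.ext (funext fun n => (hG _ hz n).trans (hxz n).symm)⟩
end

section
/- Let (b_n)_{n≥1} be a complex sequence with Σ_{n≥1} |b_n|² = 1 and b_1 ≠ 0, and define a_0 = 1 and a_n = Σ_{k=1}^{n} |b_k|² a_{n−k} for n ≥ 1. Then: (i) a_n > 0 for all n and a_{n+k} ≥ a_n · a_k for all n, k ≥ 0; (ii) for every n ≥ 0, the linear operator T_n on ℓ²(N) determined on the standard orthonormal basis (e_k) by T_n e_k = (a_k/a_{n+k})^{1/2} e_{n+k} is bounded, with operator norm exactly a_n^{-1/2}. -/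
/-!
Expanding `a (n + k)` by its recursion and keeping only the terms `j ≤ k` gives
`a (n + k) ≥ ∑_{j ≤ k} |b_j|² a (n + k - j) ≥ a n · a k` by induction on `k`. Hence every weight
`√(a k / a (n + k))` is at most `a n ^ (-1/2)`, with equality at `k = 0`. The operator `T_n` is the
diagonal operator of these weights followed by the isometric shift `e_k ↦ e_{n+k}`, so its norm is
the supremum of the weights, which is attained at `e_0`.
-/

open Finset

section Renewal

variable {c a : ℕ → ℝ}

theorem renewal_nonneg (hc : ∀ k, 0 ≤ c k)
    (ha : ∀ n, 1 ≤ n → a n = ∑ k ∈ Icc 1 n, c k * a (n - k)) (ha0 : a 0 = 1) (n : ℕ) :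
    0 ≤ a n := by
  induction n using Nat.strong_induction_on with
  | _ n ih =>
    rcases Nat.eq_zero_or_pos n with rfl | hn
    · simp [ha0]
    · rw [ha n hn]
      exact sum_nonneg fun k hk => mul_nonneg (hc k) (ih _ (by simp at hk; omega))

theorem renewal_pos (hc : ∀ k, 0 ≤ c k) (hc1 : 0 < c 1)
    (ha : ∀ n, 1 ≤ n → a n = ∑ k ∈ Icc 1 n, c k * a (n - k)) (ha0 : a 0 = 1) (n : ℕ) :
    0 < a n := by
  induction n using Nat.strong_induction_on with
  | _ n ih =>
    rcases Nat.eq_zero_or_pos n with rfl | hn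
    · simp [ha0]
    · rw [ha n hn]
      refine sum_pos' (fun k hk => mul_nonneg (hc k) (ih _ (by simp at hk; omega)).le)
        ⟨1, by simp; omega, mul_pos hc1 (ih _ (by omega))⟩

theorem renewal_mul_le (hc : ∀ k, 0 ≤ c k)
    (ha : ∀ n, 1 ≤ n → a n = ∑ k ∈ Icc 1 n, c k * a (n - k)) (ha0 : a 0 = 1) (n k : ℕ) :
    a n * a k ≤ a (n + k) := by
  induction k using Nat.strong_induction_on with
  | _ k ih =>
    rcases Nat.eq_zero_or_pos k with rfl | hk
    · simp [ha0]
    calc a n * a k = ∑ j ∈ Icc 1 k, c j * (a n * a (k - j)) := by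
          rw [ha k hk, mul_sum]
          exact sum_congr rfl fun j _ => by ring
      _ ≤ ∑ j ∈ Icc 1 k, c j * a (n + k - j) := by
          refine sum_le_sum fun j hj => mul_le_mul_of_nonneg_left ?_ (hc j)
          rw [mem_Icc] at hj
          rw [show n + k - j = n + (k - j) by omega]
          exact ih _ (by omega)
      _ ≤ ∑ j ∈ Icc 1 (n + k), c j * a (n + k - j) :=
          sum_le_sum_of_subset_of_nonneg (Icc_subset_Icc_right (by omega))
            fun j _ _ => mul_nonneg (hc j) (renewal_nonneg hc ha ha0 _)
      _ = a (n + k) := (ha _ (by omega)).symm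

end Renewal

theorem Real.sqrt_div_le_inv_sqrt {x y z : ℝ} (hx : 0 < x) (hz : 0 < z) (h : x * y ≤ z) :
    √(y / z) ≤ (√x)⁻¹ := by
  rw [← Real.sqrt_inv]
  refine Real.sqrt_le_sqrt ?_
  rw [div_le_iff₀ hz, inv_mul_eq_div, le_div_iff₀ hx, mul_comm]
  exact h

namespace lp

variable {ι ι' 𝕜 : Type*} [RCLike 𝕜] [DecidableEq ι] [DecidableEq ι']

theorem orthonormal_single :
    Orthonormal 𝕜 (fun i : ι => lp.single (E := fun _ : ι => 𝕜) 2 i 1) := by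
  convert (HilbertBasis.ofRepr (LinearIsometryEquiv.refl 𝕜 ℓ²(ι, 𝕜))).orthonormal with i
  rw [← HilbertBasis.repr_symm_single]; rfl

noncomputable def reindexIsometry (f : ι → ι') (hf : Function.Injective f) :
    ℓ²(ι, 𝕜) →ₗᵢ[𝕜] ℓ²(ι', 𝕜) :=
  ((orthonormal_single (𝕜 := 𝕜)).comp f hf).orthogonalFamily.linearIsometry

theorem reindexIsometry_single (f : ι → ι') (hf : Function.Injective f) (i : ι) (x : 𝕜) :
    reindexIsometry f hf (lp.single 2 i x) = x • lp.single 2 (f i) 1 := by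
  simp [reindexIsometry]

theorem exists_weightedShift (f : ι → ι') (hf : Function.Injective f) (w : ι → 𝕜) {C : ℝ}
    (hC : 0 ≤ C) (hw : ∀ i, ‖w i‖ ≤ C) :
    ∃ T : ℓ²(ι, 𝕜) →L[𝕜] ℓ²(ι', 𝕜),
      (∀ i, T (lp.single 2 i 1) = w i • lp.single 2 (f i) 1) ∧ ‖T‖ ≤ C := by
  let D : ℓ²(ι, 𝕜) →L[𝕜] ℓ²(ι, 𝕜) :=
    mapCLM 2 (fun i => ContinuousLinearMap.toSpanSingleton 𝕜 (w i)) hC (by simpa using hw)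
  refine ⟨(reindexIsometry f hf).toContinuousLinearMap.comp D, fun i => ?_, ?_⟩
  · have hD : D (lp.single 2 i 1) = lp.single 2 i (w i) := by
      ext j
      rcases eq_or_ne j i with rfl | h <;> simp [D, *]
    simp [hD, reindexIsometry_single]
  · rw [LinearIsometry.norm_toContinuousLinearMap_comp]
    exact norm_mapCLM_le _ _ _ _

end lp

theorem monomial_multiplier_norm_general (b : ℕ → ℂ) (a : ℕ → ℝ)
    (hb1 : b 1 ≠ 0)
    (ha0 : a 0 = 1)
    (ha : ∀ n : ℕ, 1 ≤ n → a n = ∑ k ∈ Finset.Icc 1 n, ‖b k‖ ^ 2 * a (n - k)) :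
    (∀ n : ℕ, 0 < a n) ∧
    (∀ n k : ℕ, a n * a k ≤ a (n + k)) ∧
    ∀ n : ℕ, ∃ T : lp (fun _ : ℕ => ℂ) 2 →L[ℂ] lp (fun _ : ℕ => ℂ) 2,
      (∀ k : ℕ, T (lp.single 2 k (1 : ℂ)) =
        (Real.sqrt (a k / a (n + k)) : ℂ) • lp.single 2 (n + k) (1 : ℂ)) ∧
      ‖T‖ = (Real.sqrt (a n))⁻¹ := by
  have hc : ∀ k, 0 ≤ ‖b k‖ ^ 2 := fun k => sq_nonneg _
  have hpos := renewal_pos hc (pow_pos (norm_pos_iff.mpr hb1) 2) ha ha0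
  have hmul := renewal_mul_le hc ha ha0
  refine ⟨hpos, hmul, fun n => ?_⟩
  obtain ⟨T, hT, hT_le⟩ := lp.exists_weightedShift (n + ·) (add_right_injective n)
    (fun k => (√(a k / a (n + k)) : ℂ)) (C := (√(a n))⁻¹) (by positivity) fun k => by
      rw [Complex.norm_real, Real.norm_of_nonneg (Real.sqrt_nonneg _)]
      exact Real.sqrt_div_le_inv_sqrt (hpos n) (hpos (n + k)) (hmul n k)
  refine ⟨T, hT, le_antisymm hT_le ?_⟩
  have norm_e : ∀ j, ‖lp.single (E := fun _ : ℕ => ℂ) 2 j 1‖ = 1 := fun j => by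
    simp [lp.norm_single (p := 2) (by norm_num)]
  calc (√(a n))⁻¹ = ‖T (lp.single 2 0 1)‖ := by
        rw [hT, norm_smul, norm_e, mul_one, Complex.norm_real,
          Real.norm_of_nonneg (Real.sqrt_nonneg _), ha0, add_zero, one_div, Real.sqrt_inv]
    _ ≤ ‖T‖ := T.unit_le_opNorm _ (norm_e 0).le

/-- For the renewal sequence `a_0 = 1`, `a_n = Σ_{k=1}^n |b_k|² a_{n−k}` of a unit-norm `ℓ²`
sequence `(b_n)_{n≥1}` with `b_1 ≠ 0`: (i) `a_n > 0` and `a_{n+k} ≥ a_n a_k`; (ii) for each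
`n` the operator determined on the standard basis of `ℓ²(ℕ)` by
`e_k ↦ (a_k/a_{n+k})^{1/2} e_{n+k}` is bounded with norm exactly `a_n^{-1/2}`. -/
theorem monomial_multiplier_norm (b : ℕ → ℂ) (a : ℕ → ℝ)
    (hb : HasSum (fun n : ℕ => ‖b (n + 1)‖ ^ 2) 1) (hb1 : b 1 ≠ 0)
    (ha0 : a 0 = 1)
    (ha : ∀ n : ℕ, 1 ≤ n → a n = ∑ k ∈ Finset.Icc 1 n, ‖b k‖ ^ 2 * a (n - k)) :
    (∀ n : ℕ, 0 < a n) ∧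
    (∀ n k : ℕ, a n * a k ≤ a (n + k)) ∧
    ∀ n : ℕ, ∃ T : lp (fun _ : ℕ => ℂ) 2 →L[ℂ] lp (fun _ : ℕ => ℂ) 2,
      (∀ k : ℕ, T (lp.single 2 k (1 : ℂ)) =
        (Real.sqrt (a k / a (n + k)) : ℂ) • lp.single 2 (n + k) (1 : ℂ)) ∧
      ‖T‖ = (Real.sqrt (a n))⁻¹ :=
  monomial_multiplier_norm_general b a hb1 ha0 ha
end

section
/- Let (b_n)_{n≥1} be a complex sequence with Σ_{n≥1} |b_n|² = 1 and b_1 ≠ 0, and define a_0 = 1 and a_n = Σ_{k=1}^{n} |b_k|² a_{n−k} for n ≥ 1. Then the sequence (a_n) is bounded below by a positive constant (i.e., there exists ε > 0 with a_n ≥ ε for all n) if and only if Σ_{n≥1} n |b_n|² < ∞. -/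
/-!
Write `q j = |b_{j+1}|²` and `r N = 1 - (q 0 + ⋯ + q (N-1))` for the tail of the weights, so that
`∑_N r N = ∑_n n |b_n|²` is the mean waiting time. Convolving the recurrence with `r` gives the
renewal identity `∑_{k ≤ n} a (n - k) * r k = 1`, which also shows `0 ≤ a n ≤ 1`.

If `ε ≤ a n` for all `n`, the identity bounds the partial sums of `r` by `1 / ε`. Conversely, if
`∑ r` converges, pick `K` with `∑_{k ≥ K} r k ≤ 1/2`. Since `a (m + 1) ≥ q 0 * a m`, every term
`a (n - k)` with `k < K` is at most `a n / q 0 ^ K`, so the identity gives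
`1 ≤ K * a n / q 0 ^ K + 1/2`, a lower bound for `a n` that does not depend on `n`.
-/

open Finset

namespace Renewal

/-- If `q j` is the probability that a waiting time equals `j + 1`, then `survival q N` is the
probability that it exceeds `N`. -/
noncomputable def survival (q : ℕ → ℝ) (N : ℕ) : ℝ :=
  1 - ∑ j ∈ range N, q j

section Survival

variable {q : ℕ → ℝ}

@[simp]
theorem survival_zero (q : ℕ → ℝ) : survival q 0 = 1 := by
  simp [survival]

theorem survival_succ (q : ℕ → ℝ) (N : ℕ) : survival q (N + 1) = survival q N - q N := by
  simp only [survival, sum_range_succ]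
  ring

theorem survival_le_one (hq : ∀ n, 0 ≤ q n) (N : ℕ) : survival q N ≤ 1 :=
  sub_le_self _ (sum_nonneg fun j _ => hq j)

theorem hasSum_survival (hq1 : HasSum q 1) (N : ℕ) :
    HasSum (fun j => q (j + N)) (survival q N) :=
  (hasSum_nat_add_iff' N).2 hq1

theorem survival_nonneg (hq : ∀ n, 0 ≤ q n) (hq1 : HasSum q 1) (N : ℕ) : 0 ≤ survival q N :=
  (hasSum_survival hq1 N).nonneg fun _ => hq _

theorem sum_range_survival (q : ℕ → ℝ) (N : ℕ) :
    ∑ k ∈ range N, survival q k =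
      ∑ j ∈ range N, ((j + 1 : ℕ) : ℝ) * q j + N * survival q N := by
  induction N with
  | zero => simp
  | succ N ih =>
    rw [sum_range_succ, ih, sum_range_succ, survival_succ]
    push_cast
    ring

theorem natCast_mul_survival_le_tsum (hq : ∀ n, 0 ≤ q n) (hq1 : HasSum q 1)
    (hs : Summable fun j => ((j + 1 : ℕ) : ℝ) * q j) (N : ℕ) :
    N * survival q N ≤ ∑' j, ((j + 1 : ℕ) : ℝ) * q j := by
  have htail : Summable fun j => ((j + N + 1 : ℕ) : ℝ) * q (j + N) :=
    (summable_nat_add_iff N).2 hs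
  calc (N : ℝ) * survival q N = ∑' j, (N : ℝ) * q (j + N) :=
        ((hasSum_survival hq1 N).mul_left _).tsum_eq.symm
    _ ≤ ∑' j, ((j + N + 1 : ℕ) : ℝ) * q (j + N) := by
        refine Summable.tsum_le_tsum (fun j => ?_) ((hasSum_survival hq1 N).mul_left _).summable htail
        gcongr
        · exact hq _
        · exact_mod_cast by omega
    _ ≤ ∑' j, ((j + 1 : ℕ) : ℝ) * q j := by
        rw [← hs.sum_add_tsum_nat_add N]
        exact le_add_of_nonneg_left (sum_nonneg fun j _ => mul_nonneg (Nat.cast_nonneg _) (hq j))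

theorem summable_survival_iff (hq : ∀ n, 0 ≤ q n) (hq1 : HasSum q 1) :
    Summable (survival q) ↔ Summable fun j => ((j + 1 : ℕ) : ℝ) * q j := by
  have hr := survival_nonneg hq hq1
  constructor
  · intro hsum
    refine summable_of_sum_range_le (c := ∑' k, survival q k)
      (fun j => mul_nonneg (Nat.cast_nonneg _) (hq j)) fun N => ?_
    have := hsum.sum_le_tsum (range N) fun k _ => hr k
    have := mul_nonneg (Nat.cast_nonneg N) (hr N)
    linarith [sum_range_survival q N]
  · intro hs
    refine summable_of_sum_range_le hr (c := 2 * ∑' j, ((j + 1 : ℕ) : ℝ) * q j) fun N => ?_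
    have := hs.sum_le_tsum (range N) fun j _ => mul_nonneg (Nat.cast_nonneg _) (hq j)
    linarith [sum_range_survival q N, natCast_mul_survival_le_tsum hq hq1 hs N]

end Survival

/-- The renewal equation `a n = ∑_{k=1}^n p k * a (n - k)` with weights shifted to
`q j = p (j + 1)`. -/
structure IsRenewalSeq (q a : ℕ → ℝ) : Prop where
  zero : a 0 = 1
  succ : ∀ n, a (n + 1) = ∑ i ∈ range (n + 1), q i * a (n - i)

namespace IsRenewalSeq

variable {q a : ℕ → ℝ}

theorem of_Icc {p : ℕ → ℝ} (ha0 : a 0 = 1)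
    (ha : ∀ n, 1 ≤ n → a n = ∑ k ∈ Icc 1 n, p k * a (n - k)) :
    IsRenewalSeq (fun j => p (j + 1)) a where
  zero := ha0
  succ n := by
    rw [ha (n + 1) (Nat.le_add_left 1 n), ← Ico_add_one_right_eq_Icc, sum_Ico_eq_sum_range]
    refine sum_congr (by simp) fun i _ => ?_
    rw [add_comm 1 i, Nat.add_sub_add_right]

variable (h : IsRenewalSeq q a)
include h

theorem sum_mul_survival (n : ℕ) : ∑ k ∈ range (n + 1), a (n - k) * survival q k = 1 := by
  induction n with
  | zero => simp [h.zero]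
  | succ n ih =>
    have hshift : ∑ k ∈ range (n + 1), a (n + 1 - (k + 1)) * survival q (k + 1) =
        ∑ k ∈ range (n + 1), a (n - k) * survival q k - a (n + 1) := by
      rw [h.succ, ← sum_sub_distrib]
      refine sum_congr rfl fun k _ => ?_
      rw [Nat.add_sub_add_right, survival_succ]
      ring
    rw [sum_range_succ', hshift, ih, Nat.sub_zero, survival_zero]
    ring

theorem nonneg (hq : ∀ n, 0 ≤ q n) (n : ℕ) : 0 ≤ a n := by
  induction n using Nat.strong_induction_on with
  | _ n ih =>
    rcases n with _ | n
    · simp [h.zero]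
    · rw [h.succ]
      exact sum_nonneg fun i hi => mul_nonneg (hq i) (ih _ (by omega))

theorem le_one (hq : ∀ n, 0 ≤ q n) (hq1 : HasSum q 1) (n : ℕ) : a n ≤ 1 := by
  have hr := survival_nonneg hq hq1
  have := single_le_sum (f := fun k => a (n - k) * survival q k)
    (fun k _ => mul_nonneg (h.nonneg hq _) (hr k)) (mem_range.2 n.succ_pos)
  simpa [h.sum_mul_survival n] using this

theorem mul_le_succ (hq : ∀ n, 0 ≤ q n) (n : ℕ) : q 0 * a n ≤ a (n + 1) := by
  rw [h.succ]
  simpa using single_le_sum (f := fun i => q i * a (n - i))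
    (fun i _ => mul_nonneg (hq i) (h.nonneg hq _)) (mem_range.2 n.succ_pos)

theorem pow_mul_le (hq : ∀ n, 0 ≤ q n) {k n : ℕ} (hk : k ≤ n) : q 0 ^ k * a (n - k) ≤ a n := by
  induction k with
  | zero => simp
  | succ k ih =>
    have hstep : q 0 * a (n - (k + 1)) ≤ a (n - k) := by
      simpa [show n - (k + 1) + 1 = n - k by omega] using h.mul_le_succ hq (n - (k + 1))
    calc q 0 ^ (k + 1) * a (n - (k + 1)) = q 0 ^ k * (q 0 * a (n - (k + 1))) := by ring
      _ ≤ q 0 ^ k * a (n - k) := by gcongr; exact pow_nonneg (hq 0) k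
      _ ≤ a n := ih (by omega)

theorem summable_survival_of_le (hq : ∀ n, 0 ≤ q n) (hq1 : HasSum q 1) {ε : ℝ} (hε : 0 < ε)
    (hεa : ∀ n, ε ≤ a n) : Summable (survival q) := by
  have hr := survival_nonneg hq hq1
  refine summable_of_sum_range_le hr (c := 1 / ε) fun N => ?_
  have hbound : ε * ∑ k ∈ range (N + 1), survival q k ≤ 1 := by
    rw [mul_sum, ← h.sum_mul_survival N]
    exact sum_le_sum fun k _ => mul_le_mul_of_nonneg_right (hεa _) (hr k)
  have hmono : ∑ k ∈ range N, survival q k ≤ ∑ k ∈ range (N + 1), survival q k := by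
    rw [sum_range_succ]
    exact le_add_of_nonneg_right (hr N)
  rw [le_div_iff₀ hε, mul_comm]
  exact (mul_le_mul_of_nonneg_left hmono hε.le).trans hbound

theorem one_le_natCast_mul_div_pow_add_tsum_survival (hq : ∀ n, 0 ≤ q n) (hq0 : 0 < q 0)
    (hq1 : HasSum q 1) (hr : Summable (survival q)) (K n : ℕ) :
    1 ≤ K * (a n / q 0 ^ K) + ∑' k, survival q (k + K) := by
  have hq01 : q 0 ≤ 1 := le_hasSum hq1 0 fun j _ => hq j
  have hpow : 0 < q 0 ^ K := pow_pos hq0 K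
  set c := a n / q 0 ^ K with hc
  set g : ℕ → ℝ := fun k => if k < K then c else survival q k with hg_def
  have hg_nonneg : ∀ k, 0 ≤ g k := fun k => by
    simp only [hg_def]
    split_ifs
    exacts [div_nonneg (h.nonneg hq n) hpow.le, survival_nonneg hq hq1 k]
  have hg_tail : ∀ k, g (k + K) = survival q (k + K) := fun k => if_neg (by omega)
  have hg : Summable g :=
    (summable_nat_add_iff K).1 (by simpa only [hg_tail] using (summable_nat_add_iff K).2 hr)
  have hterm : ∀ k ∈ range (n + 1), a (n - k) * survival q k ≤ g k := by
    intro k hk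
    have hkn : k ≤ n := Nat.lt_succ_iff.1 (mem_range.1 hk)
    simp only [hg_def]
    split_ifs with hkK
    · calc a (n - k) * survival q k ≤ a (n - k) :=
            mul_le_of_le_one_right (h.nonneg hq _) (survival_le_one hq k)
        _ ≤ c := by
            rw [hc, le_div_iff₀ hpow, mul_comm]
            calc q 0 ^ K * a (n - k) ≤ q 0 ^ k * a (n - k) :=
                  mul_le_mul_of_nonneg_right (pow_le_pow_of_le_one hq0.le hq01 hkK.le)
                    (h.nonneg hq _)
              _ ≤ a n := h.pow_mul_le hq hkn
    · exact mul_le_of_le_one_left (survival_nonneg hq hq1 k) (h.le_one hq hq1 _)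
  calc (1 : ℝ) = ∑ k ∈ range (n + 1), a (n - k) * survival q k := (h.sum_mul_survival n).symm
    _ ≤ ∑ k ∈ range (n + 1), g k := sum_le_sum hterm
    _ ≤ ∑' k, g k := hg.sum_le_tsum _ fun k _ => hg_nonneg k
    _ = K * c + ∑' k, survival q (k + K) := by
        rw [← hg.sum_add_tsum_nat_add K, sum_congr rfl fun k hk => if_pos (mem_range.1 hk)]
        simp only [hg_tail, sum_const, card_range, nsmul_eq_mul]

theorem exists_pos_le_of_summable_survival (hq : ∀ n, 0 ≤ q n) (hq0 : 0 < q 0)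
    (hq1 : HasSum q 1) (hr : Summable (survival q)) : ∃ ε, 0 < ε ∧ ∀ n, ε ≤ a n := by
  obtain ⟨K, hK⟩ : ∃ K, ∑' k, survival q (k + K) ≤ 1 / 2 :=
    ((tendsto_sum_nat_add (survival q)).eventually (ge_mem_nhds one_half_pos)).exists
  have hpow : 0 < q 0 ^ K := pow_pos hq0 K
  refine ⟨q 0 ^ K / (2 * (K + 1)), by positivity, fun n => ?_⟩
  have hsplit := h.one_le_natCast_mul_div_pow_add_tsum_survival hq hq0 hq1 hr K n
  have hc0 : 0 ≤ a n / q 0 ^ K := div_nonneg (h.nonneg hq n) hpow.le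
  have han : a n = a n / q 0 ^ K * q 0 ^ K := (div_mul_cancel₀ _ hpow.ne').symm
  rw [div_le_iff₀ (by positivity), han]
  nlinarith

theorem exists_pos_le_iff (hq : ∀ n, 0 ≤ q n) (hq0 : 0 < q 0) (hq1 : HasSum q 1) :
    (∃ ε, 0 < ε ∧ ∀ n, ε ≤ a n) ↔ Summable fun j => ((j + 1 : ℕ) : ℝ) * q j := by
  rw [← summable_survival_iff hq hq1]
  exact ⟨fun ⟨_, hε, hεa⟩ => h.summable_survival_of_le hq hq1 hε hεa,
    h.exists_pos_le_of_summable_survival hq hq0 hq1⟩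

end IsRenewalSeq

end Renewal

open Renewal in
/-- For the renewal sequence `a_0 = 1`, `a_n = Σ_{k=1}^n |b_k|² a_{n−k}` of a unit-norm `ℓ²`
sequence `(b_n)_{n≥1}` with `b_1 ≠ 0`, the sequence `(a_n)` is bounded below by a positive
constant if and only if `Σ_{n≥1} n |b_n|² < ∞`. -/
theorem renewal_bounded_below_iff (b : ℕ → ℂ) (a : ℕ → ℝ)
    (hb : HasSum (fun n : ℕ => ‖b (n + 1)‖ ^ 2) 1) (hb1 : b 1 ≠ 0)
    (ha0 : a 0 = 1)
    (ha : ∀ n : ℕ, 1 ≤ n → a n = ∑ k ∈ Finset.Icc 1 n, ‖b k‖ ^ 2 * a (n - k)) :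
    (∃ ε : ℝ, 0 < ε ∧ ∀ n : ℕ, ε ≤ a n) ↔
      Summable (fun n : ℕ => ((n + 1 : ℕ) : ℝ) * ‖b (n + 1)‖ ^ 2) :=
  (IsRenewalSeq.of_Icc ha0 ha).exists_pos_le_iff (fun n => by positivity)
    (pow_pos (norm_pos_iff.2 hb1) 2) hb
end

section
/- For a sequence (a_n)_{n≥0} of positive reals, let H_a denote the set of functions f : D → C on the open unit disc D of the form f(z) = Σ_{n≥0} c_n z^n (the series converging on D) with Σ_{n≥0} |c_n|²/a_n < ∞, and let Mult(H_a) = {φ : D → C : φ·f ∈ H_a for every f ∈ H_a}. Let (b_n^V)_{n≥1} and (b_n^W)_{n≥1} be complex sequences with Σ_{n≥1} |b_n^V|² = Σ_{n≥1} |b_n^W|² = 1 and b_1^V ≠ 0 ≠ b_1^W, and let (a_n^V), (a_n^W) be defined by a_0 = 1 and a_n = Σ_{k=1}^{n} |b_k|² a_{n−k} from the respective sequences. Then Mult(H_{a^V}) = Mult(H_{a^W}) if and only if the sequences (a_n^V) and (a_n^W) are comparable, i.e., there exists c ≥ 1 such that c^{-1} a_n^V ≤ a_n^W ≤ c a_n^V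 for all n. -/
open Metric
open scoped NNReal ENNReal

/-- The Hilbert function space on the unit disc with orthogonal monomials `zⁿ` of norm
`a_n^{-1/2}`: functions representable on the disc by a power series `Σ c_n zⁿ` with
`Σ |c_n|²/a_n < ∞`. -/
def Hspace (a : ℕ → ℝ) : Set (ℂ → ℂ) :=
  {f : ℂ → ℂ | ∃ c : ℕ → ℂ,
    (∀ z ∈ ball (0 : ℂ) 1, HasSum (fun n : ℕ => c n * z ^ n) (f z)) ∧
    Summable (fun n : ℕ => ‖c n‖ ^ 2 / a n)}

/-- The set of multipliers of the space `Hspace a`. -/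
def MultSet (a : ℕ → ℝ) : Set (ℂ → ℂ) :=
  {φ : ℂ → ℂ | ∀ f ∈ Hspace a, (fun z => φ z * f z) ∈ Hspace a}


lemma renewal_pos_le (b : ℕ → ℂ) (a : ℕ → ℝ)
    (hb : HasSum (fun n : ℕ => ‖b (n + 1)‖ ^ 2) 1) (hb1 : b 1 ≠ 0)
    (ha0 : a 0 = 1)
    (ha : ∀ n : ℕ, 1 ≤ n → a n = ∑ k ∈ Finset.Icc 1 n, ‖b k‖ ^ 2 * a (n - k)) :
    ∀ n, 0 < a n ∧ a n ≤ 1 := by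
  have hsum : ∀ n : ℕ, ∑ k ∈ Finset.Icc 1 n, ‖b k‖ ^ 2 ≤ 1 := by
    intro n
    have h1 : ∑ k ∈ Finset.Icc 1 n, ‖b k‖ ^ 2 = ∑ i ∈ Finset.range n, ‖b (i + 1)‖ ^ 2 := by
      rw [← Finset.Ico_add_one_right_eq_Icc, Finset.sum_Ico_eq_sum_range]
      simp [add_comm]
    rw [h1]
    exact sum_le_hasSum _ (fun i _ => by positivity) hb
  intro n
  induction n using Nat.strong_induction_on with
  | _ n ih =>
    rcases Nat.eq_zero_or_pos n with h0 | h1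
    · subst h0; simp [ha0]
    · rw [ha n h1]
      have hb1' : 0 < ‖b 1‖ := norm_pos_iff.mpr hb1
      constructor
      · have hmem : 1 ∈ Finset.Icc 1 n := by simp; omega
        have hpos : 0 < ‖b 1‖ ^ 2 * a (n - 1) := by
          have := (ih (n - 1) (by omega)).1
          positivity
        refine lt_of_lt_of_le hpos ?_
        refine Finset.single_le_sum (f := fun k => ‖b k‖ ^ 2 * a (n - k)) (fun k hk => ?_) hmem
        obtain ⟨hk1, hk2⟩ := Finset.mem_Icc.mp hk
        have := (ih (n - k) (by omega)).1
        positivity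
      · refine le_trans (Finset.sum_le_sum (fun k hk => ?_)) (hsum n)
        obtain ⟨hk1, hk2⟩ := Finset.mem_Icc.mp hk
        have h2 := ih (n - k) (by omega)
        have : 0 ≤ ‖b k‖ ^ 2 := by positivity
        nlinarith [h2.1, h2.2]

lemma renewal_supermul (b : ℕ → ℂ) (a : ℕ → ℝ) (hpos : ∀ n, 0 < a n)
    (ha0 : a 0 = 1)
    (ha : ∀ n : ℕ, 1 ≤ n → a n = ∑ k ∈ Finset.Icc 1 n, ‖b k‖ ^ 2 * a (n - k)) :
    ∀ m n, a m * a n ≤ a (m + n) := by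
  intro m n
  induction n using Nat.strong_induction_on with
  | _ n ih =>
    rcases Nat.eq_zero_or_pos n with h0 | h1
    · subst h0; simp [ha0]
    · have h2 : 1 ≤ m + n := by omega
      rw [ha n h1, ha (m + n) h2, Finset.mul_sum]
      have hsub : Finset.Icc 1 n ⊆ Finset.Icc 1 (m + n) :=
        Finset.Icc_subset_Icc_right (by omega)
      refine le_trans (Finset.sum_le_sum ?_) (Finset.sum_le_sum_of_subset_of_nonneg hsub ?_)
      · intro k hk
        obtain ⟨hk1, hk2⟩ := Finset.mem_Icc.mp hk
        have heq : m + n - k = m + (n - k) := by omega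
        rw [heq]
        have h3 := ih (n - k) (by omega)
        calc a m * (‖b k‖ ^ 2 * a (n - k)) = ‖b k‖ ^ 2 * (a m * a (n - k)) := by ring
          _ ≤ ‖b k‖ ^ 2 * a (m + (n - k)) :=
            mul_le_mul_of_nonneg_left h3 (by positivity)
      · intro k _ _
        have := hpos (m + n - k)
        positivity

lemma one_mem_Hspace (a : ℕ → ℝ) : (fun _ : ℂ => (1 : ℂ)) ∈ Hspace a := by
  refine ⟨fun n => if n = 0 then 1 else 0, fun z _ => ?_, ?_⟩
  · have : (fun n : ℕ => (if n = 0 then (1:ℂ) else 0) * z ^ n)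
        = fun n : ℕ => if n = 0 then (1:ℂ) else 0 := by
      funext n
      by_cases h : n = 0 <;> simp [h]
    rw [this]
    simpa using hasSum_ite_eq 0 (1 : ℂ)
  · have : (fun n : ℕ => ‖if n = 0 then (1:ℂ) else 0‖ ^ 2 / a n)
        = fun n : ℕ => if n = 0 then 1 / a 0 else 0 := by
      funext n
      by_cases h : n = 0 <;> simp [h]
    rw [this]
    exact summable_of_ne_finset_zero (s := {0}) (by intro n hn; simp at hn; simp [hn])

lemma MultSet_subset_Hspace (a : ℕ → ℝ) : MultSet a ⊆ Hspace a := by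
  intro φ hφ
  have := hφ _ (one_mem_Hspace a)
  simpa using this

lemma coeff_bound {a : ℕ → ℝ} {c : ℕ → ℂ} (hpos : ∀ n, 0 < a n) (hle : ∀ n, a n ≤ 1)
    (hc : Summable fun n => ‖c n‖ ^ 2 / a n) :
    ∀ n, ‖c n‖ ≤ Real.sqrt (∑' n, ‖c n‖ ^ 2 / a n) := by
  intro n
  have h1 : ‖c n‖ ^ 2 / a n ≤ ∑' n, ‖c n‖ ^ 2 / a n :=
    Summable.le_tsum hc n (fun j _ => by have := hpos j; positivity)
  have h2 : ‖c n‖ ^ 2 ≤ ‖c n‖ ^ 2 / a n := by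
    rw [le_div_iff₀ (hpos n)]
    exact mul_le_of_le_one_right (by positivity) (hle n)
  calc ‖c n‖ = Real.sqrt (‖c n‖ ^ 2) := by rw [Real.sqrt_sq (norm_nonneg _)]
    _ ≤ Real.sqrt (∑' n, ‖c n‖ ^ 2 / a n) := Real.sqrt_le_sqrt (h2.trans h1)

lemma summable_norm_coeff_mul {c : ℕ → ℂ} {M : ℝ} (hM : ∀ n, ‖c n‖ ≤ M) {z : ℂ}
    (hz : ‖z‖ < 1) : Summable fun n => ‖c n * z ^ n‖ := by
  refine Summable.of_nonneg_of_le (fun n => norm_nonneg _) (fun n => ?_)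
    ((summable_geometric_of_lt_one (norm_nonneg z) hz).mul_left M)
  rw [norm_mul, norm_pow]
  exact mul_le_mul_of_nonneg_right (hM n) (by positivity)

lemma coeff_unique {c c' : ℕ → ℂ} {F : ℂ → ℂ} {M M' : ℝ}
    (hM : ∀ n, ‖c n‖ ≤ M) (hM' : ∀ n, ‖c' n‖ ≤ M')
    (h : ∀ z ∈ ball (0 : ℂ) 1, HasSum (fun n => c n * z ^ n) (F z))
    (h' : ∀ z ∈ ball (0 : ℂ) 1, HasSum (fun n => c' n * z ^ n) (F z)) : c = c' := by
  have key : ∀ (u : ℕ → ℂ) (Mu : ℝ), (∀ n, ‖u n‖ ≤ Mu) →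
      (∀ z ∈ ball (0 : ℂ) 1, HasSum (fun n => u n * z ^ n) (F z)) →
      HasFPowerSeriesAt F (FormalMultilinearSeries.ofScalars ℂ u) 0 := by
    intro u Mu hMu hu
    refine ⟨1, ?_, by norm_num, ?_⟩
    · refine ENNReal.le_of_forall_nnreal_lt (fun r hr => ?_)
      refine FormalMultilinearSeries.le_radius_of_bound _ Mu (fun n => ?_)
      rw [FormalMultilinearSeries.ofScalars_norm]
      have hr1 : (r : ℝ) ≤ 1 := by
        have h2 : (r : ℝ≥0) ≤ 1 := by exact_mod_cast hr.le
        exact_mod_cast h2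
      calc ‖u n‖ * (r : ℝ) ^ n ≤ Mu * 1 := by
            refine mul_le_mul (hMu n) (pow_le_one₀ r.coe_nonneg hr1) (by positivity)
              ((norm_nonneg (u 0)).trans (hMu 0))
        _ = Mu := mul_one Mu
    · intro y hy
      have hy' : y ∈ ball (0 : ℂ) 1 := by
        rw [← ENNReal.coe_one, Metric.emetric_ball_nnreal] at hy
        simpa using hy
      have := hu y hy'
      simp only [FormalMultilinearSeries.ofScalars_apply_eq, smul_eq_mul, zero_add]
      exact this
  have heq := (key c M hM h).eq_formalMultilinearSeries (key c' M' hM' h')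
  exact FormalMultilinearSeries.ofScalars_series_injective ℂ ℂ heq

lemma double_sum_le {g h : ℕ → ℝ} (hg0 : ∀ n, 0 ≤ g n) (hh0 : ∀ n, 0 ≤ h n)
    (hg : Summable g) (hh : Summable h) (N : ℕ) :
    ∑ m ∈ Finset.range N, ∑ k ∈ Finset.range (m + 1), g k * h (m - k)
      ≤ (∑' n, g n) * (∑' n, h n) := by
  have step1 : ∀ m ∈ Finset.range N, ∑ k ∈ Finset.range (m + 1), g k * h (m - k)
      = ∑ k ∈ Finset.range N, if k ≤ m then g k * h (m - k) else 0 := by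
    intro m hm
    rw [Finset.mem_range] at hm
    rw [← Finset.sum_subset (Finset.range_subset_range.mpr hm)
      (fun k _ hk => by rw [Finset.mem_range, Nat.lt_succ_iff, not_le] at hk; rw [if_neg (by omega)])]
    refine Finset.sum_congr rfl (fun k hk => ?_)
    rw [Finset.mem_range, Nat.lt_succ_iff] at hk
    rw [if_pos hk]
  calc ∑ m ∈ Finset.range N, ∑ k ∈ Finset.range (m + 1), g k * h (m - k)
      = ∑ m ∈ Finset.range N, ∑ k ∈ Finset.range N, if k ≤ m then g k * h (m - k) else 0 :=
        Finset.sum_congr rfl step1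
    _ = ∑ k ∈ Finset.range N, ∑ m ∈ Finset.range N, if k ≤ m then g k * h (m - k) else 0 :=
        Finset.sum_comm
    _ ≤ ∑ k ∈ Finset.range N, g k * (∑' n, h n) := by
        refine Finset.sum_le_sum (fun k hk => ?_)
        have hfilter : (Finset.range N).filter (fun m => k ≤ m) = Finset.Ico k N := by
          ext m
          simp [Finset.mem_filter, Finset.mem_range, Finset.mem_Ico, and_comm]
        rw [← Finset.sum_filter, hfilter, Finset.sum_Ico_eq_sum_range]
        have : ∀ i ∈ Finset.range (N - k), g k * h (k + i - k) = g k * h i := by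
          intro i _; rw [Nat.add_sub_cancel_left]
        rw [Finset.sum_congr rfl this, ← Finset.mul_sum]
        exact mul_le_mul_of_nonneg_left (Summable.sum_le_tsum _ (fun i _ => hh0 i) hh) (hg0 k)
    _ ≤ (∑' n, g n) * (∑' n, h n) := by
        rw [← Finset.sum_mul]
        exact mul_le_mul_of_nonneg_right (Summable.sum_le_tsum _ (fun i _ => hg0 i) hg)
          (tsum_nonneg hh0)

lemma mem_MultSet_of_summable (a : ℕ → ℝ) (hpos : ∀ n, 0 < a n) (hle : ∀ n, a n ≤ 1)
    (hsuper : ∀ m n, a m * a n ≤ a (m + n))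
    (e : ℕ → ℂ) (hT : Summable fun n => ‖e n‖ / Real.sqrt (a n)) :
    (fun z => ∑' n, e n * z ^ n) ∈ MultSet a := by
  set T := ∑' n, ‖e n‖ / Real.sqrt (a n) with hTdef
  have hT0 : 0 ≤ T := tsum_nonneg (fun n => by positivity)
  have hM_e : ∀ n, ‖e n‖ ≤ T := by
    intro n
    have hs1 : Real.sqrt (a n) ≤ 1 := by
      rw [show (1 : ℝ) = Real.sqrt 1 by simp]
      exact Real.sqrt_le_sqrt (hle n)
    have hs0 : 0 < Real.sqrt (a n) := Real.sqrt_pos.mpr (hpos n)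
    have h1 : ‖e n‖ ≤ ‖e n‖ / Real.sqrt (a n) := by
      rw [le_div_iff₀ hs0]
      exact mul_le_of_le_one_right (norm_nonneg _) hs1
    exact h1.trans (Summable.le_tsum hT n (fun j _ => by positivity))
  intro f hf
  obtain ⟨c, hcsum, hc⟩ := hf
  set K := ∑' n, ‖c n‖ ^ 2 / a n with hKdef
  have hK0 : 0 ≤ K := tsum_nonneg (fun n => by have := hpos n; positivity)
  have hM_c : ∀ n, ‖c n‖ ≤ Real.sqrt K := coeff_bound hpos hle hc
  set d : ℕ → ℂ := fun m => ∑ k ∈ Finset.range (m + 1), e k * c (m - k) with hddef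
  set g : ℕ → ℝ := fun n => ‖e n‖ / Real.sqrt (a n) with hgdef
  set h : ℕ → ℝ := fun n => ‖c n‖ ^ 2 / a n with hhdef
  refine ⟨d, ?_, ?_⟩
  · intro z hz
    have hz' : ‖z‖ < 1 := mem_ball_zero_iff.mp hz
    have h1 : Summable fun n => ‖e n * z ^ n‖ := summable_norm_coeff_mul hM_e hz'
    have h2 : Summable fun n => ‖c n * z ^ n‖ := summable_norm_coeff_mul hM_c hz'
    have h3 := hasSum_sum_range_mul_of_summable_norm h1 h2
    have h4 : ∀ n : ℕ, ∑ k ∈ Finset.range (n + 1), (e k * z ^ k) * (c (n - k) * z ^ (n - k))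
        = d n * z ^ n := by
      intro n
      rw [hddef, Finset.sum_mul]
      refine Finset.sum_congr rfl (fun k hk => ?_)
      rw [Finset.mem_range, Nat.lt_succ_iff] at hk
      rw [show z ^ n = z ^ k * z ^ (n - k) by rw [← pow_add, Nat.add_sub_cancel' hk]]
      ring
    have h5 : ((∑' n, e n * z ^ n) * ∑' n, c n * z ^ n)
        = (fun z => ∑' n, e n * z ^ n) z * f z := by
      rw [(hcsum z hz).tsum_eq]
    rw [funext h4, h5] at h3
    exact h3
  · -- summability of the weighted coefficients of the product
    have key : ∀ m, ‖d m‖ ^ 2 / a m ≤ T * ∑ k ∈ Finset.range (m + 1), g k * h (m - k) := by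
      intro m
      have hstep1 : ‖d m‖ ≤ ∑ k ∈ Finset.range (m + 1), ‖e k‖ * ‖c (m - k)‖ := by
        refine (norm_sum_le _ _).trans (le_of_eq ?_)
        exact Finset.sum_congr rfl (fun k _ => norm_mul _ _)
      have hCS : (∑ k ∈ Finset.range (m + 1), ‖e k‖ * ‖c (m - k)‖) ^ 2
          ≤ (∑ k ∈ Finset.range (m + 1), g k)
            * (∑ k ∈ Finset.range (m + 1), ‖e k‖ * Real.sqrt (a k) * ‖c (m - k)‖ ^ 2) := by
        have hcs := Finset.sum_mul_sq_le_sq_mul_sq (Finset.range (m + 1))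
          (fun k => Real.sqrt (g k))
          (fun k => Real.sqrt (‖e k‖ * Real.sqrt (a k)) * ‖c (m - k)‖)
        have e1 : ∀ k ∈ Finset.range (m + 1),
            Real.sqrt (g k) * (Real.sqrt (‖e k‖ * Real.sqrt (a k)) * ‖c (m - k)‖)
            = ‖e k‖ * ‖c (m - k)‖ := by
          intro k _
          have hsq : Real.sqrt (g k) * Real.sqrt (‖e k‖ * Real.sqrt (a k)) = ‖e k‖ := by
            have hs0 : (0:ℝ) < Real.sqrt (a k) := Real.sqrt_pos.mpr (hpos k)
            rw [hgdef]
            rw [← Real.sqrt_mul (by positivity)]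
            rw [show ‖e k‖ / Real.sqrt (a k) * (‖e k‖ * Real.sqrt (a k)) = ‖e k‖ ^ 2 by
              rw [div_mul_eq_mul_div, div_eq_iff hs0.ne']
              ring]
            exact Real.sqrt_sq (norm_nonneg _)
          rw [← mul_assoc, hsq]
        have e2 : ∀ k ∈ Finset.range (m + 1), Real.sqrt (g k) ^ 2 = g k := by
          intro k _; exact Real.sq_sqrt (by positivity)
        have e3 : ∀ k ∈ Finset.range (m + 1),
            (Real.sqrt (‖e k‖ * Real.sqrt (a k)) * ‖c (m - k)‖) ^ 2
            = ‖e k‖ * Real.sqrt (a k) * ‖c (m - k)‖ ^ 2 := by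
          intro k _
          rw [mul_pow, Real.sq_sqrt (by positivity)]
        rw [Finset.sum_congr rfl e1, Finset.sum_congr rfl e2, Finset.sum_congr rfl e3] at hcs
        exact hcs
      have h2 : ‖d m‖ ^ 2 ≤ T * ∑ k ∈ Finset.range (m + 1),
          ‖e k‖ * Real.sqrt (a k) * ‖c (m - k)‖ ^ 2 := by
        calc ‖d m‖ ^ 2 ≤ (∑ k ∈ Finset.range (m + 1), ‖e k‖ * ‖c (m - k)‖) ^ 2 :=
              pow_le_pow_left₀ (norm_nonneg _) hstep1 2
          _ ≤ _ := hCS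
          _ ≤ T * ∑ k ∈ Finset.range (m + 1), ‖e k‖ * Real.sqrt (a k) * ‖c (m - k)‖ ^ 2 := by
              refine mul_le_mul_of_nonneg_right (Summable.sum_le_tsum _ (fun i _ => by positivity) hT)
                (Finset.sum_nonneg (fun k _ => by positivity))
      calc ‖d m‖ ^ 2 / a m
          ≤ (T * ∑ k ∈ Finset.range (m + 1), ‖e k‖ * Real.sqrt (a k) * ‖c (m - k)‖ ^ 2) / a m := by
            gcongr
            exact (hpos m).le
        _ = T * ∑ k ∈ Finset.range (m + 1),
              (‖e k‖ * Real.sqrt (a k) * ‖c (m - k)‖ ^ 2) / a m := by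
            rw [mul_div_assoc, Finset.sum_div]
        _ ≤ T * ∑ k ∈ Finset.range (m + 1), g k * h (m - k) := by
            refine mul_le_mul_of_nonneg_left (Finset.sum_le_sum (fun k hk => ?_)) hT0
            rw [Finset.mem_range, Nat.lt_succ_iff] at hk
            have hsub : a k * a (m - k) ≤ a m := by
              have := hsuper k (m - k)
              rwa [Nat.add_sub_cancel' hk] at this
            have hd1 : (‖e k‖ * Real.sqrt (a k) * ‖c (m - k)‖ ^ 2) / a m
                ≤ (‖e k‖ * Real.sqrt (a k) * ‖c (m - k)‖ ^ 2) / (a k * a (m - k)) :=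
              div_le_div_of_nonneg_left (by positivity)
                (mul_pos (hpos k) (hpos (m - k))) hsub
            refine hd1.trans (le_of_eq ?_)
            have hs0 : (0:ℝ) < Real.sqrt (a k) := Real.sqrt_pos.mpr (hpos k)
            have hA : (0:ℝ) < a (m - k) := hpos (m - k)
            rw [hgdef, hhdef]
            rw [div_mul_div_comm]
            have hss : Real.sqrt (a k) * Real.sqrt (a k) = a k := Real.mul_self_sqrt (hpos k).le
            rw [div_eq_div_iff (mul_pos (hpos k) hA).ne' (mul_pos hs0 hA).ne']
            linear_combination (‖e k‖ * ‖c (m - k)‖ ^ 2 * a (m - k)) * hss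
    have hbound : ∀ N : ℕ, ∑ m ∈ Finset.range N, ‖d m‖ ^ 2 / a m ≤ T * (T * K) := by
      intro N
      calc ∑ m ∈ Finset.range N, ‖d m‖ ^ 2 / a m
          ≤ ∑ m ∈ Finset.range N, T * ∑ k ∈ Finset.range (m + 1), g k * h (m - k) :=
            Finset.sum_le_sum (fun m _ => key m)
        _ = T * ∑ m ∈ Finset.range N, ∑ k ∈ Finset.range (m + 1), g k * h (m - k) := by
            rw [Finset.mul_sum]
        _ ≤ T * (T * K) := by
            refine mul_le_mul_of_nonneg_left ?_ hT0
            exact double_sum_le (fun n => by positivity)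
              (fun n => by have := hpos n; positivity) hT hc N
    exact summable_of_sum_range_le (fun m => by have := hpos m; positivity) hbound

lemma exists_mult_not_Hspace (a a' : ℕ → ℝ)
    (hpos : ∀ n, 0 < a n) (hle : ∀ n, a n ≤ 1)
    (hsuper : ∀ m n, a m * a n ≤ a (m + n))
    (h'pos : ∀ n, 0 < a' n) (h'le : ∀ n, a' n ≤ 1)
    (hunb : ∀ C : ℝ, ∃ n, C * a' n < a n) :
    ∃ φ, φ ∈ MultSet a ∧ φ ∉ Hspace a' := by
  -- an improved choice function producing arbitrarily large indices
  have H : ∀ (N : ℕ) (C : ℝ), ∃ n, N < n ∧ C * a' n < a n := by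
    intro N C
    set M := Finset.sup' (Finset.range (N + 1)) (by simp) (fun m => a m / a' m) with hM0
    obtain ⟨n, hn⟩ := hunb (max C M)
    have hCn : C * a' n < a n :=
      lt_of_le_of_lt (mul_le_mul_of_nonneg_right (le_max_left _ _) (h'pos n).le) hn
    refine ⟨n, ?_, hCn⟩
    by_contra hn'
    push_neg at hn'
    have h1 : a n / a' n ≤ M :=
      Finset.le_sup' (fun m => a m / a' m) (Finset.mem_range.mpr (by omega))
    have h3 : max C M < a n / a' n := by
      rw [lt_div_iff₀ (h'pos n)]
      exact hn
    exact absurd (h3.trans_le h1) (not_lt.mpr (le_max_right C M))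
  classical
  -- the sequence of indices
  let Cj : ℕ → ℝ := fun j => ((j : ℝ) + 1) ^ 5
  let nseq : ℕ → ℕ := fun j =>
    Nat.rec (H 0 (Cj 0)).choose (fun j prev => (H prev (Cj (j + 1))).choose) j
  have hmono : ∀ j, nseq j < nseq (j + 1) := fun j => (H (nseq j) (Cj (j + 1))).choose_spec.1
  have hratio : ∀ j, Cj j * a' (nseq j) < a (nseq j) := by
    intro j
    cases j with
    | zero => exact (H 0 (Cj 0)).choose_spec.2
    | succ j => exact (H (nseq j) (Cj (j + 1))).choose_spec.2
  have hinj : Function.Injective nseq := (strictMono_nat_of_lt_succ hmono).injective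
  -- the coefficients
  let ε : ℕ → ℝ := fun j => (((j : ℝ) + 1) ^ 2)⁻¹ * Real.sqrt (a (nseq j))
  have hε0 : ∀ j, 0 ≤ ε j := fun j => by positivity
  let e : ℕ → ℂ := Function.extend nseq (fun j => (ε j : ℂ)) 0
  have he_app : ∀ j, e (nseq j) = (ε j : ℂ) := fun j => hinj.extend_apply _ _ _
  have he_zero : ∀ n, (¬ ∃ j, nseq j = n) → e n = 0 := by
    intro n hn
    have : e n = (0 : ℕ → ℂ) n := Function.extend_apply' _ _ _ hn
    simpa using this
  -- p-series summability
  have hp : Summable (fun j : ℕ => (((j : ℝ) + 1) ^ 2)⁻¹) := by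
    have h1 : Summable (fun n : ℕ => 1 / (n : ℝ) ^ 2) :=
      Real.summable_one_div_nat_pow.mpr (by norm_num)
    have h2 := (summable_nat_add_iff 1).mpr h1
    refine h2.congr (fun j => ?_)
    push_cast
    rw [one_div]
  -- summability of the multiplier weight
  have hT : Summable (fun n => ‖e n‖ / Real.sqrt (a n)) := by
    have hfun : (fun n => ‖e n‖ / Real.sqrt (a n))
        = Function.extend nseq (fun j => (((j : ℝ) + 1) ^ 2)⁻¹) 0 := by
      funext n
      rcases Classical.em (∃ j, nseq j = n) with hn | hn
      · obtain ⟨j, rfl⟩ := hn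
        rw [hinj.extend_apply, he_app]
        have hs0 : (0 : ℝ) < Real.sqrt (a (nseq j)) := Real.sqrt_pos.mpr (hpos (nseq j))
        rw [Complex.norm_real, Real.norm_eq_abs, abs_of_nonneg (hε0 j)]
        show (((j : ℝ) + 1) ^ 2)⁻¹ * Real.sqrt (a (nseq j)) / Real.sqrt (a (nseq j)) = _
        rw [mul_div_assoc, div_self hs0.ne', mul_one]
      · rw [Function.extend_apply' _ _ _ hn, he_zero n hn]
        simp
    rw [hfun, summable_extend_zero hinj]
    exact hp
  refine ⟨fun z => ∑' n, e n * z ^ n, mem_MultSet_of_summable a hpos hle hsuper e hT, ?_⟩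
  -- now show it is not in Hspace a'
  rintro ⟨c, hcsum, hc⟩
  have hM_e : ∀ n, ‖e n‖ ≤ 1 := by
    intro n
    rcases Classical.em (∃ j, nseq j = n) with hn | hn
    · obtain ⟨j, rfl⟩ := hn
      rw [he_app, Complex.norm_real, Real.norm_eq_abs, abs_of_nonneg (hε0 j)]
      have h1 : (((j : ℝ) + 1) ^ 2)⁻¹ ≤ 1 := by
        rw [inv_le_one_iff₀]
        right
        nlinarith [Nat.cast_nonneg (α := ℝ) j]
      have h2 : Real.sqrt (a (nseq j)) ≤ 1 := by
        rw [show (1 : ℝ) = Real.sqrt 1 by simp]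
        exact Real.sqrt_le_sqrt (hle (nseq j))
      calc ε j ≤ 1 * 1 := mul_le_mul h1 h2 (Real.sqrt_nonneg _) zero_le_one
        _ = 1 := mul_one 1
    · rw [he_zero n hn]; simp
  have hesum : ∀ z ∈ ball (0 : ℂ) 1, HasSum (fun n => e n * z ^ n)
      ((fun z => ∑' n, e n * z ^ n) z) := by
    intro z hz
    exact ((summable_norm_coeff_mul hM_e (mem_ball_zero_iff.mp hz)).of_norm).hasSum
  have hce : c = e :=
    coeff_unique (coeff_bound h'pos h'le hc) hM_e hcsum hesum
  rw [hce] at hc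
  have hcomp := hc.comp_injective hinj
  have hterm : ∀ j : ℕ, (1 : ℝ) ≤ ‖e (nseq j)‖ ^ 2 / a' (nseq j) := by
    intro j
    have hA : (0 : ℝ) < a' (nseq j) := h'pos (nseq j)
    have ht1 : (1 : ℝ) ≤ (j : ℝ) + 1 := by
      nlinarith [Nat.cast_nonneg (α := ℝ) j]
    have hx : ((j : ℝ) + 1) ^ 5 ≤ a (nseq j) / a' (nseq j) :=
      le_of_lt ((lt_div_iff₀ hA).mpr (hratio j))
    have he2 : ‖e (nseq j)‖ ^ 2 = ((((j : ℝ) + 1) ^ 2)⁻¹) ^ 2 * a (nseq j) := by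
      rw [he_app, Complex.norm_real, Real.norm_eq_abs, abs_of_nonneg (hε0 j)]
      show ((((j : ℝ) + 1) ^ 2)⁻¹ * Real.sqrt (a (nseq j))) ^ 2 = _
      rw [mul_pow, Real.sq_sqrt (hpos (nseq j)).le]
    rw [he2]
    have ht0 : ((j : ℝ) + 1) ≠ 0 := by positivity
    calc (1 : ℝ) ≤ (j : ℝ) + 1 := ht1
      _ = ((((j : ℝ) + 1) ^ 2)⁻¹) ^ 2 * ((j : ℝ) + 1) ^ 5 := by
          field_simp
      _ ≤ ((((j : ℝ) + 1) ^ 2)⁻¹) ^ 2 * (a (nseq j) / a' (nseq j)) :=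
          mul_le_mul_of_nonneg_left hx (by positivity)
      _ = ((((j : ℝ) + 1) ^ 2)⁻¹) ^ 2 * a (nseq j) / a' (nseq j) := by
          rw [mul_div_assoc]
  have hev := hcomp.tendsto_atTop_zero.eventually_lt_const one_pos
  obtain ⟨j, hj⟩ := hev.exists
  exact absurd (hterm j) (not_le.mpr hj)

lemma Hspace_subset_of_le {aV aW : ℕ → ℝ} {C : ℝ}
    (hWpos : ∀ n, 0 < aW n) (hVpos : ∀ n, 0 < aV n)
    (hC : ∀ n, aV n ≤ C * aW n) : Hspace aV ⊆ Hspace aW := by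
  rintro f ⟨c, hsum, hs⟩
  refine ⟨c, hsum, ?_⟩
  refine Summable.of_nonneg_of_le (fun n => by have := hWpos n; positivity)
    (fun n => ?_) (hs.mul_left C)
  rw [show C * (‖c n‖ ^ 2 / aV n) = C * ‖c n‖ ^ 2 / aV n by rw [mul_div_assoc]]
  rw [div_le_div_iff₀ (hWpos n) (hVpos n)]
  nlinarith [hC n, sq_nonneg ‖c n‖, (hWpos n).le, norm_nonneg (c n)]

/-- For two embedded discs given by unit-norm `ℓ²` sequences `(b_n^V)`, `(b_n^W)` with
nonzero first entries, and associated renewal sequences `(a_n^V)`, `(a_n^W)`, the multiplier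
algebras coincide if and only if the sequences `(a_n^V)` and `(a_n^W)` are comparable. -/
theorem mult_eq_iff_comparable (bV bW : ℕ → ℂ) (aV aW : ℕ → ℝ)
    (hbV : HasSum (fun n : ℕ => ‖bV (n + 1)‖ ^ 2) 1) (hbV1 : bV 1 ≠ 0)
    (hbW : HasSum (fun n : ℕ => ‖bW (n + 1)‖ ^ 2) 1) (hbW1 : bW 1 ≠ 0)
    (haV0 : aV 0 = 1)
    (haV : ∀ n : ℕ, 1 ≤ n → aV n = ∑ k ∈ Finset.Icc 1 n, ‖bV k‖ ^ 2 * aV (n - k))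
    (haW0 : aW 0 = 1)
    (haW : ∀ n : ℕ, 1 ≤ n → aW n = ∑ k ∈ Finset.Icc 1 n, ‖bW k‖ ^ 2 * aW (n - k)) :
    MultSet aV = MultSet aW ↔
      ∃ c : ℝ, 1 ≤ c ∧ ∀ n : ℕ, aV n / c ≤ aW n ∧ aW n ≤ c * aV n := by

  have hV := renewal_pos_le bV aV hbV hbV1 haV0 haV
  have hW := renewal_pos_le bW aW hbW hbW1 haW0 haW
  have hVpos : ∀ n, 0 < aV n := fun n => (hV n).1
  have hVle : ∀ n, aV n ≤ 1 := fun n => (hV n).2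
  have hWpos : ∀ n, 0 < aW n := fun n => (hW n).1
  have hWle : ∀ n, aW n ≤ 1 := fun n => (hW n).2
  have hVsuper := renewal_supermul bV aV hVpos haV0 haV
  have hWsuper := renewal_supermul bW aW hWpos haW0 haW
  constructor
  · intro hMeq
    by_contra hcomp
    have hcases : (∀ C : ℝ, ∃ n, C * aW n < aV n) ∨ (∀ C : ℝ, ∃ n, C * aV n < aW n) := by
      by_contra hboth
      push_neg at hboth
      obtain ⟨⟨C1, hC1⟩, ⟨C2, hC2⟩⟩ := hboth
      set c := max 1 (max C1 C2) with hc
      have hc1 : (1 : ℝ) ≤ c := le_max_left _ _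
      have hc0 : (0 : ℝ) < c := lt_of_lt_of_le one_pos hc1
      refine hcomp ⟨c, hc1, fun n => ⟨?_, ?_⟩⟩
      · rw [div_le_iff₀ hc0]
        calc aV n ≤ C1 * aW n := hC1 n
          _ ≤ c * aW n := mul_le_mul_of_nonneg_right
              ((le_max_left C1 C2).trans (le_max_right 1 _)) (hWpos n).le
          _ = aW n * c := mul_comm _ _
      · calc aW n ≤ C2 * aV n := hC2 n
          _ ≤ c * aV n := mul_le_mul_of_nonneg_right
              ((le_max_right C1 C2).trans (le_max_right 1 _)) (hVpos n).le
    rcases hcases with hunb | hunb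
    · obtain ⟨φ, hφ1, hφ2⟩ :=
        exists_mult_not_Hspace aV aW hVpos hVle hVsuper hWpos hWle hunb
      rw [hMeq] at hφ1
      exact hφ2 (MultSet_subset_Hspace aW hφ1)
    · obtain ⟨φ, hφ1, hφ2⟩ :=
        exists_mult_not_Hspace aW aV hWpos hWle hWsuper hVpos hVle hunb
      rw [← hMeq] at hφ1
      exact hφ2 (MultSet_subset_Hspace aV hφ1)
  · rintro ⟨C, hC1, hC⟩
    have hC0 : (0 : ℝ) < C := lt_of_lt_of_le one_pos hC1
    have hsub1 : Hspace aV ⊆ Hspace aW := by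
      refine Hspace_subset_of_le hWpos hVpos (C := C) (fun n => ?_)
      have := (hC n).1
      rw [div_le_iff₀ hC0] at this
      linarith [mul_comm (aW n) C]
    have hsub2 : Hspace aW ⊆ Hspace aV :=
      Hspace_subset_of_le hVpos hWpos (C := C) (fun n => (hC n).2)
    have heq : Hspace aV = Hspace aW := le_antisymm hsub1 hsub2
    unfold MultSet
    rw [heq]
end

section
/- For every real s ∈ [−1, 0], there exists a sequence (β_n)_{n≥1} of nonnegative reals with Σ_{n≥1} β_n = 1 and β_1 > 0 such that the sequence a_n = (n+1)^s satisfies a_0 = 1 and a_n = Σ_{k=1}^{n} β_k a_{n−k} for all n ≥ 1; equivalently, Σ_{n≥0} (n+1)^s t^n = (1 − Σ_{n≥1} β_n t^n)^{-1} for all t ∈ [0,1). -/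
/-!
Take for `β` the coefficients of `1 - 1 / A(X)` with `A(X) = ∑ aₙ Xⁿ`, `aₙ = (n+1)^s`. The renewal
equation is then the coefficient identity `(1 - 1/A) · A = A - 1`, and the generating-function
identity is the same identity evaluated at `t` through the Cauchy product.

Nonnegativity of `β` is Kaluza's theorem: `aₙ₊₁ / aₙ` is nondecreasing (`a` is log-convex), so
multiplying the renewal equation at `n` termwise by this ratio dominates the one at `n + 1`.
Since `a` is nonincreasing, `a_N = ∑ β_k a_{N-k} ≥ a_N ∑ β_k` gives `∑ β_k ≤ 1`; conversely the
partial sums `S_N = ∑_{n ≤ N} aₙ` satisfy `S_N - 1 ≤ (∑ β_k) S_N`, and `S_N → ∞` because `s ≥ -1`,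
which forces `∑ β_k = 1`.
-/

open Finset PowerSeries Filter

noncomputable def renewalWeights {K : Type*} [Field K] (a : ℕ → K) (n : ℕ) : K :=
  coeff n (1 - (mk a)⁻¹)

section Field

variable {K : Type*} [Field K] {a : ℕ → K}

theorem renewalWeights_zero (ha0 : a 0 = 1) : renewalWeights a 0 = 0 := by
  simp [renewalWeights, ha0]

theorem sum_range_renewalWeights_mul (ha0 : a 0 ≠ 0) (n : ℕ) :
    ∑ k ∈ range (n + 1), renewalWeights a k * a (n - k) = a n - if n = 0 then 1 else 0 := by
  have h : (1 - (mk a)⁻¹) * mk a = mk a - 1 := by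
    rw [sub_mul, one_mul, PowerSeries.inv_mul_cancel _ (by simpa using ha0)]
  have := congrArg (coeff n) h
  rw [coeff_mul, Nat.sum_antidiagonal_eq_sum_range_succ
    (fun i j => coeff i (1 - (mk a)⁻¹) * coeff j (mk a)), map_sub, coeff_one, coeff_mk] at this
  simp only [coeff_mk] at this
  exact this

theorem renewalWeights_succ (ha0 : a 0 = 1) (n : ℕ) :
    renewalWeights a (n + 1) =
      a (n + 1) - ∑ k ∈ range (n + 1), renewalWeights a k * a (n + 1 - k) := by
  have h := sum_range_renewalWeights_mul (a := a) (by simp [ha0]) (n + 1)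
  rw [sum_range_succ, Nat.sub_self, ha0, mul_one, if_neg n.succ_ne_zero] at h
  linear_combination h

theorem renewalWeights_one (ha0 : a 0 = 1) : renewalWeights a 1 = a 1 := by
  simp [renewalWeights_succ ha0, renewalWeights_zero ha0]

theorem eq_sum_Icc_renewalWeights_mul (ha0 : a 0 = 1) {n : ℕ} (hn : n ≠ 0) :
    a n = ∑ k ∈ Icc 1 n, renewalWeights a k * a (n - k) := by
  have h := sum_range_renewalWeights_mul (a := a) (by simp [ha0]) n
  rw [range_eq_Ico, sum_eq_sum_Ico_succ_bot n.succ_pos, renewalWeights_zero ha0, zero_mul,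
    zero_add, if_neg hn, sub_zero] at h
  rw [← h]
  rfl

end Field

theorem summable_norm_mul_pow_of_norm_le {K : Type*} [NormedDivisionRing K] {u : ℕ → K}
    {C : ℝ} {t : K} (hu : ∀ n, ‖u n‖ ≤ C) (ht : ‖t‖ < 1) : Summable fun n => ‖u n * t ^ n‖ := by
  refine .of_nonneg_of_le (fun n => norm_nonneg _) (fun n => ?_)
    ((summable_geometric_of_lt_one (norm_nonneg t) ht).mul_left C)
  rw [norm_mul, norm_pow]
  exact mul_le_mul_of_nonneg_right (hu n) (by positivity)

section NormedField

variable {K : Type*} [NormedField K] [CompleteSpace K] {a : ℕ → K}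

theorem tsum_mul_pow_eq_inv_one_sub (ha0 : a 0 = 1) {t : K}
    (ha : Summable fun n => ‖a n * t ^ n‖)
    (hβ : Summable fun n => ‖renewalWeights a n * t ^ n‖) :
    ∑' n, a n * t ^ n = (1 - ∑' n, renewalWeights a (n + 1) * t ^ (n + 1))⁻¹ := by
  have hconv (n : ℕ) : ∑ k ∈ range (n + 1), renewalWeights a k * t ^ k * (a (n - k) * t ^ (n - k))
      = a n * t ^ n - if n = 0 then 1 else 0 := by
    calc _ = (∑ k ∈ range (n + 1), renewalWeights a k * a (n - k)) * t ^ n := by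
          rw [sum_mul]
          refine sum_congr rfl fun k hk => ?_
          rw [← Nat.add_sub_cancel' (Nat.lt_succ_iff.mp (mem_range.mp hk)), pow_add,
            Nat.add_sub_cancel_left]
          ring
      _ = _ := by
          rw [sum_range_renewalWeights_mul (by simp [ha0])]
          split_ifs with hn <;> simp [hn]
  have hprod : (∑' n, renewalWeights a n * t ^ n) * ∑' n, a n * t ^ n
      = ∑' n, a n * t ^ n - 1 := by
    rw [tsum_mul_tsum_eq_tsum_sum_range_of_summable_norm hβ ha, tsum_congr hconv]
    exact (ha.of_norm.hasSum.sub (hasSum_ite_eq 0 1)).tsum_eq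
  rw [hβ.of_norm.tsum_eq_zero_add, renewalWeights_zero ha0, zero_mul, zero_add] at hprod
  refine eq_inv_of_mul_eq_one_left ?_
  linear_combination -hprod

end NormedField

section Real

variable {a : ℕ → ℝ}

theorem renewalWeights_nonneg (ha0 : a 0 = 1) (hpos : ∀ n, 0 < a n)
    (hratio : Monotone fun n => a (n + 1) / a n) (n : ℕ) : 0 ≤ renewalWeights a n := by
  induction n using Nat.strong_induction_on with
  | _ n ih =>
  rcases n with _ | n
  · rw [renewalWeights_zero ha0]
  rw [renewalWeights_succ ha0, sub_nonneg]
  rcases Nat.eq_zero_or_pos n with rfl | hn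
  · simp [renewalWeights_zero ha0, (hpos 1).le]
  have hprev := sum_range_renewalWeights_mul (a := a) (by simp [ha0]) n
  rw [if_neg hn.ne', sub_zero] at hprev
  refine le_of_mul_le_mul_left ?_ (hpos n)
  calc a n * ∑ k ∈ range (n + 1), renewalWeights a k * a (n + 1 - k)
      = ∑ k ∈ range (n + 1), renewalWeights a k * (a (n - k + 1) * a n) := by
        rw [mul_sum]
        refine sum_congr rfl fun k hk => ?_
        rw [Nat.sub_add_comm (Nat.lt_succ_iff.mp (mem_range.mp hk))]
        ring
    _ ≤ ∑ k ∈ range (n + 1), renewalWeights a k * (a (n + 1) * a (n - k)) := by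
        refine sum_le_sum fun k hk => mul_le_mul_of_nonneg_left ?_ (ih k (mem_range.mp hk))
        have := hratio (Nat.sub_le n k)
        rwa [div_le_div_iff₀ (hpos _) (hpos _)] at this
    _ = a n * a (n + 1) := by
        rw [mul_comm, ← hprev, mul_sum]
        exact sum_congr rfl fun k _ => by ring

theorem sum_range_renewalWeights_le_one (ha0 : a 0 = 1) (hpos : ∀ n, 0 < a n) (hanti : Antitone a)
    (hβ : ∀ n, 0 ≤ renewalWeights a n) (N : ℕ) : ∑ k ∈ range N, renewalWeights a k ≤ 1 := by
  rcases N with _ | N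
  · simp
  refine le_of_mul_le_mul_right ?_ (hpos N)
  calc (∑ k ∈ range (N + 1), renewalWeights a k) * a N
      ≤ ∑ k ∈ range (N + 1), renewalWeights a k * a (N - k) := by
        rw [sum_mul]
        exact sum_le_sum fun k _ => mul_le_mul_of_nonneg_left (hanti (Nat.sub_le N k)) (hβ k)
    _ ≤ 1 * a N := by
        rw [sum_range_renewalWeights_mul (by simp [ha0]), one_mul]
        split_ifs <;> linarith

theorem hasSum_renewalWeights_one (ha0 : a 0 = 1) (hpos : ∀ n, 0 < a n) (hanti : Antitone a)
    (hβ : ∀ n, 0 ≤ renewalWeights a n) (hdiv : ¬ Summable a) :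
    HasSum (renewalWeights a) 1 := by
  have hpartial := sum_range_renewalWeights_le_one ha0 hpos hanti hβ
  have hsum := summable_of_sum_range_le hβ hpartial
  set T := ∑' n, renewalWeights a n
  suffices 1 ≤ T from (le_antisymm (Real.tsum_le_of_sum_range_le hβ hpartial) this) ▸ hsum.hasSum
  have hbound (N : ℕ) : (∑ n ∈ range (N + 1), a n) * (1 - T) ≤ 1 := by
    have hconv : ∑ n ∈ range (N + 1), a n - 1
        = ∑ m ∈ range (N + 1), renewalWeights a m * ∑ k ∈ range (N + 1 - m), a k := by
      simp_rw [mul_sum, ← sum_range_diag_flip (N + 1) fun m k => renewalWeights a m * a k,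
        sum_range_renewalWeights_mul (a := a) (by simp [ha0]), sum_sub_distrib, sum_ite_eq',
        if_pos (mem_range.mpr N.succ_pos)]
    have hle : ∑ m ∈ range (N + 1), renewalWeights a m * ∑ k ∈ range (N + 1 - m), a k
        ≤ T * ∑ n ∈ range (N + 1), a n := by
      calc _ ≤ ∑ m ∈ range (N + 1), renewalWeights a m * ∑ n ∈ range (N + 1), a n := by
            refine sum_le_sum fun m _ => mul_le_mul_of_nonneg_left ?_ (hβ m)
            exact sum_le_sum_of_subset_of_nonneg (range_subset_range.mpr (Nat.sub_le _ _))
              fun n _ _ => (hpos n).le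
        _ ≤ T * ∑ n ∈ range (N + 1), a n := by
            rw [← sum_mul]
            exact mul_le_mul_of_nonneg_right (hsum.sum_le_tsum _ fun n _ => hβ n)
              (sum_nonneg fun n _ => (hpos n).le)
    linarith
  by_contra! hT
  have htend : Tendsto (fun N => (∑ n ∈ range (N + 1), a n) * (1 - T)) atTop atTop :=
    (((not_summable_iff_tendsto_nat_atTop_of_nonneg fun n => (hpos n).le).mp hdiv).comp
      (tendsto_add_atTop_nat 1)).atTop_mul_const (by linarith)
  obtain ⟨N, hN⟩ := (htend.eventually_gt_atTop 1).exists
  exact (hbound N).not_gt hN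

end Real

section Rpow

variable {s : ℝ}

theorem antitone_rpow_natCast_add_one (hs : s ≤ 0) : Antitone fun n : ℕ => ((n : ℝ) + 1) ^ s :=
  fun m n hmn => Real.rpow_le_rpow_of_nonpos (by positivity) (by gcongr) hs

theorem monotone_rpow_natCast_add_one_ratio (hs : s ≤ 0) :
    Monotone fun n : ℕ => (((n + 1 : ℕ) : ℝ) + 1) ^ s / ((n : ℝ) + 1) ^ s := by
  intro m n hmn
  have hmn' : (m : ℝ) ≤ n := by exact_mod_cast hmn
  dsimp only
  rw [← Real.div_rpow (by positivity) (by positivity),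
    ← Real.div_rpow (by positivity) (by positivity)]
  refine Real.rpow_le_rpow_of_nonpos (by positivity) ?_ hs
  rw [div_le_div_iff₀ (by positivity) (by positivity)]
  push_cast
  nlinarith

theorem not_summable_rpow_natCast_add_one (hs : -1 ≤ s) :
    ¬ Summable fun n : ℕ => ((n : ℝ) + 1) ^ s := by
  intro h
  have : Summable fun n : ℕ => ((n + 1 : ℕ) : ℝ) ^ s := by simpa using h
  exact hs.not_gt (Real.summable_nat_rpow.mp ((summable_nat_add_iff 1).mp this))

end Rpow

/-- For every `s ∈ [−1,0]`, the sequence `a_n = (n+1)^s` is the renewal sequence of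
probability weights `β_n`, `n ≥ 1`, with `β_1 > 0`: `a_0 = 1`,
`a_n = Σ_{k=1}^n β_k a_{n−k}`, and equivalently
`Σ_{n≥0} (n+1)^s tⁿ = (1 − Σ_{n≥1} β_n tⁿ)⁻¹` for `t ∈ [0,1)`. -/
theorem rpow_kernel_is_renewal (s : ℝ) (hs1 : -1 ≤ s) (hs0 : s ≤ 0) :
    ∃ β : ℕ → ℝ,
      (∀ n : ℕ, 0 ≤ β n) ∧
      HasSum (fun n : ℕ => β (n + 1)) 1 ∧
      0 < β 1 ∧
      (((0 : ℕ) : ℝ) + 1) ^ s = 1 ∧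
      (∀ n : ℕ, 1 ≤ n →
        ((n : ℝ) + 1) ^ s = ∑ k ∈ Finset.Icc 1 n, β k * (((n - k : ℕ) : ℝ) + 1) ^ s) ∧
      ∀ t : ℝ, 0 ≤ t → t < 1 →
        Summable (fun n : ℕ => ((n : ℝ) + 1) ^ s * t ^ n) ∧
        Summable (fun n : ℕ => β (n + 1) * t ^ (n + 1)) ∧
        ∑' n : ℕ, ((n : ℝ) + 1) ^ s * t ^ n =
          (1 - ∑' n : ℕ, β (n + 1) * t ^ (n + 1))⁻¹ := by
  set a : ℕ → ℝ := fun n => ((n : ℝ) + 1) ^ s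
  have ha0 : a 0 = 1 := by simp [a]
  have hpos (n : ℕ) : 0 < a n := by positivity
  have hanti : Antitone a := antitone_rpow_natCast_add_one hs0
  have hβ := renewalWeights_nonneg ha0 hpos (monotone_rpow_natCast_add_one_ratio hs0)
  have hsum := hasSum_renewalWeights_one ha0 hpos hanti hβ (not_summable_rpow_natCast_add_one hs1)
  refine ⟨renewalWeights a, hβ, ?_, renewalWeights_one ha0 ▸ hpos 1, ha0,
    fun n hn => eq_sum_Icc_renewalWeights_mul ha0 (by omega), fun t ht0 ht1 => ?_⟩
  · simpa [renewalWeights_zero ha0] using (hasSum_nat_add_iff' 1).mpr hsum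
  have ht : ‖t‖ < 1 := by rwa [Real.norm_of_nonneg ht0]
  have hA : Summable fun n => ‖a n * t ^ n‖ := summable_norm_mul_pow_of_norm_le (C := 1)
    (fun n => by rw [Real.norm_of_nonneg (hpos n).le, ← ha0]; exact hanti n.zero_le) ht
  have hB : Summable fun n => ‖renewalWeights a n * t ^ n‖ := summable_norm_mul_pow_of_norm_le
    (fun n => (Real.norm_of_nonneg (hβ n)).trans_le (le_hasSum hsum n fun k _ => hβ k)) ht
  exact ⟨hA.of_norm, (summable_nat_add_iff (f := fun n => renewalWeights a n * t ^ n) 1).mpr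
    hB.of_norm, tsum_mul_pow_eq_inv_one_sub ha0 hA hB⟩
end

section
/- Fix r ∈ (0,1), let b(z) = (z − r)/(1 − rz), and define G(z) = (1/√2)(z², b(z)²) ∈ C². Then: (i) ‖G(z)‖ < 1 for every z in the open unit disc D, i.e., G maps D into the open unit ball B_2 of C²; (ii) G is injective on D; (iii) G extends to a map holomorphic in a neighborhood of the closed unit disc (since the only pole 1/r of b lies outside), and the extension satisfies G(1) = G(−1) = (1/√2)(1, 1). -/
/-!
The second coordinate of `√2 G` is the square of the disc automorphism `b`, by the identity
`|1 - ā z|² - |z - a|² = (1 - |a|²)(1 - |z|²)`; so both coordinates of `√2 G z` lie in the disc and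
`‖G z‖² < 1`. If `G z = G w` then `z = ±w`, and `b(-w)² = b(w)²` cross-multiplies to
`w (1 - |a|²) (ā w² - a) = 0`, which for `0 < |a| < 1` and `|w| < 1` forces `w = 0`.
The only pole `1 / ā` of `b` lies outside the closed disc, and for real `a` the factor `b` fixes `±1`.
-/

open Metric ComplexConjugate

noncomputable def blaschkeFactor (a z : ℂ) : ℂ := (z - a) / (1 - conj a * z)

theorem one_sub_conj_mul_ne_zero {a z : ℂ} (ha : ‖a‖ < 1) (hz : ‖z‖ ≤ 1) :
    1 - conj a * z ≠ 0 := by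
  have : ‖conj a * z‖ < 1 := by
    rw [norm_mul, Complex.norm_conj]
    nlinarith [norm_nonneg a, norm_nonneg z]
  intro h
  rw [← sub_eq_zero.mp h, norm_one] at this
  exact lt_irrefl _ this

theorem normSq_one_sub_conj_mul_sub_normSq_sub (a z : ℂ) :
    Complex.normSq (1 - conj a * z) - Complex.normSq (z - a) =
      (1 - Complex.normSq a) * (1 - Complex.normSq z) := by
  simp only [Complex.normSq_apply, Complex.sub_re, Complex.sub_im, Complex.mul_re,
    Complex.mul_im, Complex.conj_re, Complex.conj_im, Complex.one_re, Complex.one_im]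
  ring

theorem norm_blaschkeFactor_lt_one {a z : ℂ} (ha : ‖a‖ < 1) (hz : ‖z‖ < 1) :
    ‖blaschkeFactor a z‖ < 1 := by
  have hden := one_sub_conj_mul_ne_zero ha hz.le
  rw [blaschkeFactor, norm_div, div_lt_one (norm_pos_iff.mpr hden),
    ← sq_lt_sq₀ (norm_nonneg _) (norm_nonneg _), Complex.sq_norm, Complex.sq_norm, ← sub_pos,
    normSq_one_sub_conj_mul_sub_normSq_sub, ← Complex.sq_norm, ← Complex.sq_norm]
  apply mul_pos <;> nlinarith [norm_nonneg a, norm_nonneg z]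

theorem differentiableOn_blaschkeFactor (a : ℂ) :
    DifferentiableOn ℂ (blaschkeFactor a) {z | 1 - conj a * z ≠ 0} :=
  (differentiableOn_id.sub_const a).div
    ((differentiableOn_const 1).sub (differentiableOn_id.const_mul _)) fun _ hz => hz

theorem eq_zero_of_blaschkeFactor_neg_sq_eq {a w : ℂ} (ha0 : a ≠ 0) (ha : ‖a‖ < 1) (hw : ‖w‖ < 1)
    (h : blaschkeFactor a (-w) ^ 2 = blaschkeFactor a w ^ 2) : w = 0 := by
  have hd := one_sub_conj_mul_ne_zero ha hw.le
  have hd' := one_sub_conj_mul_ne_zero ha (norm_neg w ▸ hw.le)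
  rw [blaschkeFactor, blaschkeFactor, div_pow, div_pow,
    div_eq_div_iff (pow_ne_zero 2 hd') (pow_ne_zero 2 hd)] at h
  have hconj : conj a * a = (Complex.normSq a : ℂ) := by rw [mul_comm, Complex.mul_conj]
  have key : w * (1 - (Complex.normSq a : ℂ)) * (conj a * w ^ 2 - a) = 0 := by
    linear_combination (-1/4 : ℂ) * h - (w * a - w ^ 3 * conj a) * hconj
  have hN : (1 - (Complex.normSq a : ℂ)) ≠ 0 := by
    rw [← Complex.ofReal_one, ← Complex.ofReal_sub, Complex.ofReal_ne_zero, ← Complex.sq_norm]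
    nlinarith [norm_nonneg a]
  rcases mul_eq_zero.mp key with hw0 | hfix
  · exact (mul_eq_zero.mp hw0).resolve_right hN
  · have hnorm : ‖a‖ * ‖w‖ ^ 2 = ‖a‖ := by
      simpa using congrArg norm (sub_eq_zero.mp hfix)
    have : ‖w‖ ^ 2 = 1 := by
      simpa [norm_ne_zero_iff.mpr ha0] using hnorm
    nlinarith [norm_nonneg w]

theorem blaschkeFactor_ofReal (r : ℝ) (z : ℂ) :
    blaschkeFactor r z = (z - r) / (1 - r * z) := by
  rw [blaschkeFactor, Complex.conj_ofReal]

theorem blaschkeFactor_ofReal_one {r : ℝ} (hr : r ≠ 1) : blaschkeFactor r 1 = 1 := by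
  rw [blaschkeFactor_ofReal, mul_one, div_self]
  exact sub_ne_zero.mpr (by exact_mod_cast hr.symm)

theorem blaschkeFactor_ofReal_neg_one {r : ℝ} (hr : r ≠ -1) : blaschkeFactor r (-1) = -1 := by
  have hden : 1 - (r : ℂ) * -1 ≠ 0 := by
    rw [mul_neg_one, sub_neg_eq_add, add_comm]
    exact_mod_cast fun h => hr (eq_neg_of_add_eq_zero_left h)
  rw [blaschkeFactor_ofReal, div_eq_iff hden]
  ring

theorem eq_of_sq_eq_of_blaschkeFactor_sq_eq {a z w : ℂ} (ha0 : a ≠ 0) (ha : ‖a‖ < 1)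
    (hw : ‖w‖ < 1) (hsq : z ^ 2 = w ^ 2) (hb : blaschkeFactor a z ^ 2 = blaschkeFactor a w ^ 2) :
    z = w := by
  rcases sq_eq_sq_iff_eq_or_eq_neg.mp hsq with h | rfl
  · exact h
  · rw [eq_zero_of_blaschkeFactor_neg_sq_eq ha0 ha hw hb, neg_zero]

noncomputable def twistedDiscMap (a z : ℂ) : EuclideanSpace ℂ (Fin 2) :=
  (WithLp.equiv 2 (Fin 2 → ℂ)).symm
    ![((Real.sqrt 2 : ℂ))⁻¹ * z ^ 2, ((Real.sqrt 2 : ℂ))⁻¹ * blaschkeFactor a z ^ 2]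

theorem norm_twistedDiscMap_sq (a z : ℂ) :
    ‖twistedDiscMap a z‖ ^ 2 = (‖z‖ ^ 4 + ‖blaschkeFactor a z‖ ^ 4) / 2 := by
  simp only [twistedDiscMap, EuclideanSpace.norm_sq_eq, Fin.sum_univ_two, WithLp.equiv_symm_apply,
    Matrix.cons_val_zero, Matrix.cons_val_one, norm_mul, norm_inv, norm_pow,
    Complex.norm_real, Real.norm_of_nonneg (Real.sqrt_nonneg 2)]
  rw [mul_pow, mul_pow, inv_pow, Real.sq_sqrt zero_le_two]
  ring

theorem norm_twistedDiscMap_lt_one {a z : ℂ} (ha : ‖a‖ < 1) (hz : ‖z‖ < 1) :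
    ‖twistedDiscMap a z‖ < 1 := by
  have hb := norm_blaschkeFactor_lt_one ha hz
  rw [← sq_lt_one_iff₀ (norm_nonneg _), norm_twistedDiscMap_sq]
  linarith [pow_lt_one₀ (norm_nonneg z) hz (by norm_num : 4 ≠ 0),
    pow_lt_one₀ (norm_nonneg _) hb (by norm_num : 4 ≠ 0)]

theorem injOn_twistedDiscMap {a : ℂ} (ha0 : a ≠ 0) (ha : ‖a‖ < 1) :
    Set.InjOn (twistedDiscMap a) (ball 0 1) := by
  intro z _ w hw h
  have hc : ((Real.sqrt 2 : ℂ))⁻¹ ≠ 0 := by simp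
  have h0 := congrArg (· 0) h
  have h1 := congrArg (· 1) h
  simp only [twistedDiscMap, WithLp.equiv_symm_apply, Matrix.cons_val_zero, Matrix.cons_val_one,
    Matrix.cons_val_fin_one, mul_eq_mul_left_iff, hc, or_false] at h0 h1
  exact eq_of_sq_eq_of_blaschkeFactor_sq_eq ha0 ha (mem_ball_zero_iff.mp hw) h0 h1

theorem differentiableOn_twistedDiscMap (a : ℂ) :
    DifferentiableOn ℂ (twistedDiscMap a) {z | 1 - conj a * z ≠ 0} := by
  rw [differentiableOn_euclidean]
  intro i
  fin_cases i
  · exact (differentiableOn_pow 2).const_mul _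
  · exact ((differentiableOn_blaschkeFactor a).pow 2).const_mul _

/-- For `r ∈ (0,1)`, `b(z) = (z−r)/(1−rz)` and `G(z) = (z²/√2, b(z)²/√2)`:
(i) `G` maps the open unit disc into the open unit ball of `ℂ²`; (ii) `G` is injective on
the disc; (iii) `G` extends holomorphically to a neighborhood of the closed disc, with
`G(1) = G(−1) = (1/√2)(1,1)`. -/
theorem twisted_disc_embedding (r : ℝ) (hr0 : 0 < r) (hr1 : r < 1)
    (b : ℂ → ℂ) (hbdef : ∀ z : ℂ, b z = (z - (r : ℂ)) / (1 - (r : ℂ) * z))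
    (G : ℂ → EuclideanSpace ℂ (Fin 2))
    (hGdef : ∀ z : ℂ, G z = (WithLp.equiv 2 (Fin 2 → ℂ)).symm
      ![((Real.sqrt 2 : ℂ))⁻¹ * z ^ 2, ((Real.sqrt 2 : ℂ))⁻¹ * (b z) ^ 2]) :
    (∀ z ∈ ball (0 : ℂ) 1, ‖G z‖ < 1) ∧
    Set.InjOn G (ball (0 : ℂ) 1) ∧
    ∃ U : Set ℂ, IsOpen U ∧ closedBall (0 : ℂ) 1 ⊆ U ∧
      ∃ Gext : ℂ → EuclideanSpace ℂ (Fin 2),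
        DifferentiableOn ℂ Gext U ∧
        (∀ z ∈ ball (0 : ℂ) 1, Gext z = G z) ∧
        Gext 1 = (WithLp.equiv 2 (Fin 2 → ℂ)).symm
          ![((Real.sqrt 2 : ℂ))⁻¹, ((Real.sqrt 2 : ℂ))⁻¹] ∧
        Gext (-1) = (WithLp.equiv 2 (Fin 2 → ℂ)).symm
          ![((Real.sqrt 2 : ℂ))⁻¹, ((Real.sqrt 2 : ℂ))⁻¹] := by
  obtain rfl : b = blaschkeFactor r := funext fun z => by rw [hbdef, blaschkeFactor_ofReal]
  obtain rfl : G = twistedDiscMap r := funext hGdef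
  have hr : ‖(r : ℂ)‖ < 1 := by rwa [Complex.norm_real, Real.norm_of_nonneg hr0.le]
  have hr_ne : (r : ℂ) ≠ 0 := Complex.ofReal_ne_zero.mpr hr0.ne'
  refine ⟨fun z hz => norm_twistedDiscMap_lt_one hr (mem_ball_zero_iff.mp hz),
    injOn_twistedDiscMap hr_ne hr, {z | 1 - conj (r : ℂ) * z ≠ 0},
    isOpen_ne_fun (by fun_prop) continuous_const,
    fun z hz => one_sub_conj_mul_ne_zero hr (mem_closedBall_zero_iff.mp hz),
    twistedDiscMap r, differentiableOn_twistedDiscMap r, fun _ _ => rfl, ?_, ?_⟩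
  · simp [twistedDiscMap, blaschkeFactor_ofReal_one hr1.ne]
  · simp [twistedDiscMap, blaschkeFactor_ofReal_neg_one (by linarith : r ≠ -1)]
end

section
/- Let V = {1 − 1/n² : n a positive integer} and W = {1 − e^{−n²} : n a positive integer}, both subsets of the open unit disc D. Then there exist bounded holomorphic functions g and h on D such that g(1 − e^{−n²}) = 1 − 1/n² and h(1 − 1/n²) = 1 − e^{−n²} for every positive integer n; in particular h ∘ g restricted to W is the identity of W and g ∘ h restricted to V is the identity of V, so V and W are multiplier biholomorphic subvarieties of D. -/
/-!
The map `h z = 1 - exp (1 / (z - 1))` sends `1 - 1/n²` to `1 - e^{-n²}` and is bounded by `2`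
on the disc, where `Re (1 / (z - 1)) ≤ 0`.

For `g`, the substitution `ζ = log (1 - z)` sends `1 - e^{-n²}` to `-n²` and the disc into the
half-strip `Re ζ ≤ 1, |Im ζ| ≤ 2`. The function `S ζ = sinh (π √ζ) / (π √ζ)` does not depend on the
choice of `√ζ`, so it is holomorphic off `0`; it tends to `1` at `0` and vanishes at every `-n²`.
Hence `Φ ζ = 1 + (1 - S ζ) / ζ` extends to an entire function with `Φ (-n²) = 1 - 1/n²`, and `Φ`
is bounded on the half-strip because `√ζ` has bounded real part there. Take `g = Φ ∘ log (1 - ·)`.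
-/

open Metric Filter Topology
open scoped Real

lemma eq_of_even_of_sq_eq {R E : Type*} [CommRing R] [NoZeroDivisors R] {F : R → E}
    (heven : ∀ w, F (-w) = F w) {w₁ w₂ : R} (h : w₁ ^ 2 = w₂ ^ 2) : F w₁ = F w₂ := by
  rcases sq_eq_sq_iff_eq_or_eq_neg.mp h with rfl | rfl
  exacts [rfl, heven w₂]

theorem differentiableAt_comp_cpow_inv_two_of_even {E : Type*} [NormedAddCommGroup E]
    [NormedSpace ℂ E] {F : ℂ → E} (heven : ∀ w, F (-w) = F w) {z : ℂ} (hz : z ≠ 0)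
    (hF : ∀ w, w ^ 2 = z → DifferentiableAt ℂ F w) :
    DifferentiableAt ℂ (fun ζ ↦ F (ζ ^ (2⁻¹ : ℂ))) z := by
  rcases Complex.mem_slitPlane_or_neg_mem_slitPlane hz with hs | hs
  · exact (hF _ (Complex.cpow_ofNat_inv_pow z 2)).comp z
      (differentiableAt_id.cpow_const hs)
  · -- off the slit plane, use the other branch `I * (-ζ) ^ (1/2)` of the square root
    have hbranch : (fun ζ ↦ F (ζ ^ (2⁻¹ : ℂ))) = fun ζ ↦ F (Complex.I * (-ζ) ^ (2⁻¹ : ℂ)) := by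
      ext ζ
      exact eq_of_even_of_sq_eq heven (by simp [mul_pow])
    rw [hbranch]
    exact (hF _ (by simp [mul_pow])).comp z
      ((differentiableAt_neg_iff.mpr differentiableAt_id).cpow_const hs |>.const_mul _)

lemma abs_re_le_two_of_sq {w : ℂ} (hre : (w ^ 2).re ≤ 1) (him : |(w ^ 2).im| ≤ 2) :
    |w.re| ≤ 2 := by
  have hre' : w.re ^ 2 - w.im ^ 2 ≤ 1 := by simpa [sq] using hre
  have him' : (w.re * w.im) ^ 2 ≤ 1 := by
    have : (w ^ 2).im = 2 * w.re * w.im := by simp [sq]; ring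
    have := abs_le.mp him
    nlinarith
  have : w.re ^ 2 ≤ 2 ^ 2 := by nlinarith [sq_nonneg w.im, sq_nonneg w.re]
  simpa using sq_le_sq.mp this

lemma norm_sinh_le_exp_abs_re (v : ℂ) : ‖Complex.sinh v‖ ≤ Real.exp |v.re| := by
  have h2 : ‖Complex.sinh v‖ ≤ (‖Complex.exp v‖ + ‖Complex.exp (-v)‖) / 2 := by
    rw [Complex.sinh, norm_div, Complex.norm_two]
    gcongr
    exact norm_sub_le _ _
  rw [Complex.norm_exp, Complex.norm_exp, Complex.neg_re] at h2
  have := Real.exp_le_exp.mpr (le_abs_self v.re)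
  have := Real.exp_le_exp.mpr (neg_le_abs v.re)
  linarith

noncomputable def sinhPiDiv (w : ℂ) : ℂ := Complex.sinh (π * w) / (π * w)

lemma sinhPiDiv_neg (w : ℂ) : sinhPiDiv (-w) = sinhPiDiv w := by
  simp [sinhPiDiv, Complex.sinh_neg, neg_div_neg_eq]

lemma differentiableAt_sinhPiDiv {w : ℂ} (hw : w ≠ 0) : DifferentiableAt ℂ sinhPiDiv w := by
  have hpw : (π : ℂ) * w ≠ 0 := mul_ne_zero (by exact_mod_cast Real.pi_ne_zero) hw
  unfold sinhPiDiv
  fun_prop (disch := exact hpw)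

lemma tendsto_sinhPiDiv_nhdsNE_zero : Tendsto sinhPiDiv (𝓝[≠] 0) (𝓝 1) := by
  have hslope : Tendsto (slope Complex.sinh 0) (𝓝[≠] 0) (𝓝 1) := by
    simpa using hasDerivAt_iff_tendsto_slope.mp (Complex.hasDerivAt_sinh 0)
  have hmul : Tendsto (fun w : ℂ ↦ (π : ℂ) * w) (𝓝[≠] 0) (𝓝[≠] 0) := by
    have hpi : (π : ℂ) ≠ 0 := by exact_mod_cast Real.pi_ne_zero
    refine tendsto_nhdsWithin_of_tendsto_nhds_of_eventually_within _ ?_ ?_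
    · simpa using ((continuous_const_mul (π : ℂ)).tendsto 0).mono_left nhdsWithin_le_nhds
    · filter_upwards [self_mem_nhdsWithin] with w hw using mul_ne_zero hpi hw
  refine (hslope.comp hmul).congr fun w ↦ ?_
  simp [sinhPiDiv, slope_def_field]

lemma tendsto_cpow_inv_two_nhdsNE_zero :
    Tendsto (fun ζ : ℂ ↦ ζ ^ (2⁻¹ : ℂ)) (𝓝[≠] 0) (𝓝[≠] 0) := by
  refine tendsto_nhdsWithin_of_tendsto_nhds_of_eventually_within _ ?_ ?_
  · have := Complex.continuousAt_cpow_const_of_re_pos (z := 0) (w := 2⁻¹) (by simp) (by norm_num)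
    simpa using this.tendsto.mono_left nhdsWithin_le_nhds
  · filter_upwards [self_mem_nhdsWithin] with ζ hζ
    simpa [Complex.cpow_eq_zero_iff] using hζ

noncomputable def rawInterpolant (ζ : ℂ) : ℂ := 1 + (1 - sinhPiDiv (ζ ^ (2⁻¹ : ℂ))) / ζ

noncomputable def interpolant : ℂ → ℂ :=
  Function.update rawInterpolant 0 (limUnder (𝓝[≠] 0) rawInterpolant)

lemma differentiableAt_rawInterpolant {ζ : ℂ} (hζ : ζ ≠ 0) :
    DifferentiableAt ℂ rawInterpolant ζ := by
  have hsqrt : DifferentiableAt ℂ (fun ζ ↦ sinhPiDiv (ζ ^ (2⁻¹ : ℂ))) ζ :=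
    differentiableAt_comp_cpow_inv_two_of_even sinhPiDiv_neg hζ fun w hw ↦
      differentiableAt_sinhPiDiv (by rintro rfl; exact hζ (by simpa using hw.symm))
  unfold rawInterpolant
  fun_prop (disch := exact hζ)

lemma differentiable_interpolant : Differentiable ℂ interpolant := by
  rw [← differentiableOn_univ]
  refine Complex.differentiableOn_update_limUnder_of_isLittleO Filter.univ_mem
    (fun ζ hζ ↦ (differentiableAt_rawInterpolant hζ.2).differentiableWithinAt) ?_
  -- `(rawInterpolant ζ - 1) / ζ⁻¹ = 1 - sinhPiDiv √ζ`
  rw [Asymptotics.isLittleO_iff_tendsto (by simp)]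
  have hlim : Tendsto (fun ζ : ℂ ↦ 1 - sinhPiDiv (ζ ^ (2⁻¹ : ℂ))) (𝓝[≠] 0) (𝓝 0) := by
    simpa using (tendsto_const_nhds (x := (1 : ℂ))).sub
      (tendsto_sinhPiDiv_nhdsNE_zero.comp tendsto_cpow_inv_two_nhdsNE_zero)
  refine hlim.congr' ?_
  filter_upwards [self_mem_nhdsWithin] with ζ hζ
  have hζ : ζ ≠ 0 := hζ
  simp [rawInterpolant, hζ]

lemma interpolant_neg_sq {n : ℕ} (hn : n ≠ 0) :
    interpolant (-(n : ℂ) ^ 2) = 1 - 1 / (n : ℂ) ^ 2 := by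
  have hn0 : (n : ℂ) ≠ 0 := Nat.cast_ne_zero.mpr hn
  have hsinh : sinhPiDiv ((-(n : ℂ) ^ 2) ^ (2⁻¹ : ℂ)) = 0 := by
    rw [eq_of_even_of_sq_eq sinhPiDiv_neg (w₂ := n * Complex.I) (by simp [mul_pow]),
      sinhPiDiv, ← mul_assoc, Complex.sinh_mul_I, mul_comm (π : ℂ), Complex.sin_nat_mul_pi]
    simp
  rw [interpolant, Function.update_of_ne (by simpa using hn0), rawInterpolant, hsinh]
  field_simp
  ring

lemma norm_sinhPiDiv_le {w : ℂ} (hre : |w.re| ≤ 2) (hw : 1 ≤ ‖w‖) :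
    ‖sinhPiDiv w‖ ≤ Real.exp (2 * π) := by
  have hnum : ‖Complex.sinh (π * w)‖ ≤ Real.exp (2 * π) := by
    refine (norm_sinh_le_exp_abs_re _).trans (Real.exp_le_exp.mpr ?_)
    rw [Complex.re_ofReal_mul, abs_mul, abs_of_pos Real.pi_pos, mul_comm]
    gcongr
  have hden : 1 ≤ ‖(π : ℂ) * w‖ := by
    rw [norm_mul, Complex.norm_real, Real.norm_of_nonneg Real.pi_pos.le]
    nlinarith [Real.pi_gt_three]
  rw [sinhPiDiv, norm_div]
  exact div_le_of_le_mul₀ (norm_nonneg _) (Real.exp_pos _).le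
    (hnum.trans (le_mul_of_one_le_right (Real.exp_pos _).le hden))

lemma norm_rawInterpolant_le {ζ : ℂ} (hre : ζ.re ≤ 1) (him : |ζ.im| ≤ 2) (hζ : 1 ≤ ‖ζ‖) :
    ‖rawInterpolant ζ‖ ≤ 2 + Real.exp (2 * π) := by
  set w := ζ ^ (2⁻¹ : ℂ)
  have hw2 : w ^ 2 = ζ := Complex.cpow_ofNat_inv_pow ζ 2
  have hw : 1 ≤ ‖w‖ := by
    have : ‖w‖ ^ 2 = ‖ζ‖ := by rw [← norm_pow, hw2]
    nlinarith [norm_nonneg w]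
  have hs := norm_sinhPiDiv_le (abs_re_le_two_of_sq (hw2 ▸ hre) (hw2 ▸ him)) hw
  have hquot : ‖(1 - sinhPiDiv w) / ζ‖ ≤ 1 + Real.exp (2 * π) := by
    rw [norm_div]
    refine div_le_of_le_mul₀ (norm_nonneg _) (by positivity) ?_
    calc ‖1 - sinhPiDiv w‖ ≤ 1 + ‖sinhPiDiv w‖ := by simpa using norm_sub_le (1 : ℂ) _
      _ ≤ (1 + Real.exp (2 * π)) * ‖ζ‖ := by nlinarith [Real.exp_pos (2 * π)]
  calc ‖rawInterpolant ζ‖ ≤ ‖(1 : ℂ)‖ + ‖(1 - sinhPiDiv w) / ζ‖ := norm_add_le _ _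
    _ = 1 + ‖(1 - sinhPiDiv w) / ζ‖ := by rw [norm_one]
    _ ≤ 2 + Real.exp (2 * π) := by linarith

lemma exists_bound_interpolant :
    ∃ C, ∀ ζ : ℂ, ζ.re ≤ 1 → |ζ.im| ≤ 2 → ‖interpolant ζ‖ ≤ C := by
  obtain ⟨C₀, hC₀⟩ := (isCompact_closedBall (0 : ℂ) 1).exists_bound_of_continuousOn
    differentiable_interpolant.continuous.continuousOn
  refine ⟨max C₀ (2 + Real.exp (2 * π)), fun ζ hre him ↦ ?_⟩
  by_cases hζ : ζ ∈ closedBall (0 : ℂ) 1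
  · exact le_max_of_le_left (hC₀ ζ hζ)
  · have hζ1 : 1 < ‖ζ‖ := by simpa using hζ
    have hζ0 : ζ ≠ 0 := norm_pos_iff.mp (one_pos.trans hζ1)
    rw [interpolant, Function.update_of_ne hζ0]
    exact le_max_of_le_right (norm_rawInterpolant_le hre him hζ1.le)

lemma one_sub_mem_slitPlane {z : ℂ} (hz : z ∈ ball (0 : ℂ) 1) : 1 - z ∈ Complex.slitPlane := by
  simpa [sub_eq_add_neg] using
    Complex.mem_slitPlane_of_norm_lt_one (z := -z) (by simpa using hz)

lemma re_log_one_sub_le_one {z : ℂ} (hz : z ∈ ball (0 : ℂ) 1) : (Complex.log (1 - z)).re ≤ 1 := by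
  have hpos : 0 < ‖1 - z‖ :=
    norm_pos_iff.mpr (Complex.slitPlane_ne_zero (one_sub_mem_slitPlane hz))
  have hle : ‖1 - z‖ ≤ 2 :=
    (norm_sub_le 1 z).trans (by rw [norm_one]; linarith [mem_ball_zero_iff.mp hz])
  rw [Complex.log_re]
  linarith [Real.log_le_sub_one_of_pos hpos]

lemma abs_im_log_one_sub_le_two {z : ℂ} (hz : z ∈ ball (0 : ℂ) 1) :
    |(Complex.log (1 - z)).im| ≤ 2 := by
  have hz1 : z.re < 1 := (Complex.re_le_norm z).trans_lt (mem_ball_zero_iff.mp hz)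
  rw [Complex.log_im]
  refine (Complex.abs_arg_le_pi_div_two_iff.mpr (by simp; linarith)).trans ?_
  linarith [Real.pi_le_four]

lemma log_one_sub_one_sub_exp (x : ℝ) : Complex.log (1 - ((1 - Real.exp x : ℝ) : ℂ)) = x := by
  rw [show (1 : ℂ) - ((1 - Real.exp x : ℝ) : ℂ) = (Real.exp x : ℂ) by push_cast; ring,
    ← Complex.ofReal_log (Real.exp_pos x).le, Real.log_exp]

lemma norm_one_sub_exp_le_two {u : ℂ} (hu : u.re ≤ 0) : ‖1 - Complex.exp u‖ ≤ 2 := by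
  have : ‖Complex.exp u‖ ≤ 1 := by rw [Complex.norm_exp]; exact Real.exp_le_one_iff.mpr hu
  calc ‖1 - Complex.exp u‖ ≤ ‖(1 : ℂ)‖ + ‖Complex.exp u‖ := norm_sub_le _ _
    _ ≤ 2 := by rw [norm_one]; linarith

lemma re_inv_sub_one_nonpos {z : ℂ} (hz : z ∈ ball (0 : ℂ) 1) : ((z - 1)⁻¹).re ≤ 0 := by
  have hz1 : z.re < 1 := (Complex.re_le_norm z).trans_lt (mem_ball_zero_iff.mp hz)
  rw [Complex.inv_re]
  exact div_nonpos_of_nonpos_of_nonneg (by simp; linarith) (Complex.normSq_nonneg _)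

/-- The sequences `V = {1 − 1/n²}` and `W = {1 − e^{−n²}}` in the unit disc are multiplier
biholomorphic: there are bounded holomorphic functions `g, h` on the disc with
`g(1 − e^{−n²}) = 1 − 1/n²` and `h(1 − 1/n²) = 1 − e^{−n²}` for all `n ≥ 1`; in particular
`h ∘ g` is the identity on `W` and `g ∘ h` is the identity on `V`. -/
theorem blaschke_sequences_multiplier_biholomorphic
    (V W : Set ℂ)
    (hV : V = {x : ℂ | ∃ n : ℕ, 1 ≤ n ∧ x = 1 - 1 / (n : ℂ) ^ 2})
    (hW : W = {x : ℂ | ∃ n : ℕ, 1 ≤ n ∧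
      x = ((1 - Real.exp (-((n : ℝ) ^ 2)) : ℝ) : ℂ)}) :
    ∃ g h : ℂ → ℂ,
      DifferentiableOn ℂ g (ball (0 : ℂ) 1) ∧
      (∃ C : ℝ, ∀ z ∈ ball (0 : ℂ) 1, ‖g z‖ ≤ C) ∧
      DifferentiableOn ℂ h (ball (0 : ℂ) 1) ∧
      (∃ C : ℝ, ∀ z ∈ ball (0 : ℂ) 1, ‖h z‖ ≤ C) ∧
      (∀ n : ℕ, 1 ≤ n →
        g (((1 - Real.exp (-((n : ℝ) ^ 2)) : ℝ) : ℂ)) = 1 - 1 / (n : ℂ) ^ 2 ∧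
        h (1 - 1 / (n : ℂ) ^ 2) = ((1 - Real.exp (-((n : ℝ) ^ 2)) : ℝ) : ℂ)) ∧
      (∀ w ∈ W, h (g w) = w) ∧ (∀ v ∈ V, g (h v) = v) := by
  subst hV hW
  obtain ⟨C, hC⟩ := exists_bound_interpolant
  set g : ℂ → ℂ := fun z ↦ interpolant (Complex.log (1 - z))
  set h : ℂ → ℂ := fun z ↦ 1 - Complex.exp ((z - 1)⁻¹)
  have hg (n : ℕ) (hn : 1 ≤ n) :
      g (((1 - Real.exp (-((n : ℝ) ^ 2)) : ℝ) : ℂ)) = 1 - 1 / (n : ℂ) ^ 2 := by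
    simp only [g, log_one_sub_one_sub_exp]
    exact_mod_cast interpolant_neg_sq (by omega)
  have hh (n : ℕ) (hn : 1 ≤ n) :
      h (1 - 1 / (n : ℂ) ^ 2) = ((1 - Real.exp (-((n : ℝ) ^ 2)) : ℝ) : ℂ) := by
    have hn0 : (n : ℂ) ≠ 0 := by exact_mod_cast (by omega : n ≠ 0)
    simp only [h, show (1 - 1 / (n : ℂ) ^ 2 - 1)⁻¹ = -(n : ℂ) ^ 2 by field_simp; ring]
    push_cast
    rfl
  refine ⟨g, h, fun z hz ↦ ?_, ⟨C, fun z hz ↦ hC _ (re_log_one_sub_le_one hz)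
    (abs_im_log_one_sub_le_two hz)⟩, fun z hz ↦ ?_, ⟨2, fun z hz ↦
    norm_one_sub_exp_le_two (re_inv_sub_one_nonpos hz)⟩, fun n hn ↦ ⟨hg n hn, hh n hn⟩, ?_, ?_⟩
  · have hslit := one_sub_mem_slitPlane hz
    exact (differentiable_interpolant.differentiableAt.comp z
      (by fun_prop (disch := exact hslit))).differentiableWithinAt
  · have hz1 : z - 1 ≠ 0 := sub_ne_zero.mpr (by rintro rfl; simp at hz)
    exact (by fun_prop (disch := exact hz1) : DifferentiableAt ℂ h z).differentiableWithinAt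
  · rintro _ ⟨n, hn, rfl⟩
    rw [hg n hn, hh n hn]
  · rintro _ ⟨n, hn, rfl⟩
    rw [hh n hn, hg n hn]
end

section
/- Let v_1, v_2, v_3 and w_1, w_2, w_3 be unit vectors in C² such that v_1, v_2, v_3 span three pairwise distinct complex lines and likewise w_1, w_2, w_3 span three pairwise distinct complex lines; write w_3 = b_1 w_1 + b_2 w_2 and v_3 = c_1 v_1 + c_2 v_2. Then: (1) there exists an invertible linear map A : C² → C² with A(span{w_1} ∪ span{w_2} ∪ span{w_3}) = span{v_1} ∪ span{v_2} ∪ span{v_3} and A w_i ∈ span{v_i} for i = 1, 2, 3; (2) there exists a linear map A : C² → C² with A w_i ∈ span{v_i} for i = 1, 2, 3 and ‖A x‖ = ‖x‖ for every x ∈ span{w_1} ∪ span{w_2} ∪ span{w_3}, if and only if |b_1| = |c_1| and |b_2| = |c_2|. -/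
/-!
Independent pairs `(w₁, w₂)` and `(v₁, v₂)` in a plane are bases, so there is a linear
isomorphism with `A wᵢ = (cᵢ / bᵢ) vᵢ`; then `A w₃ = b₁ A w₁ + b₂ A w₂ = v₃`, and `A` maps each
line onto the corresponding line. It is isometric on the lines exactly when `|cᵢ / bᵢ| = 1`.
Conversely, a map isometric on the lines sends `wᵢ` to `μᵢ vᵢ` with `|μᵢ| = 1`; comparing
coefficients in `b₁ μ₁ v₁ + b₂ μ₂ v₂ = B w₃ = μ₃ (c₁ v₁ + c₂ v₂)` gives `|bᵢ| = |cᵢ|`.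
-/

open Module Submodule

section LinearAlgebra

variable {K E F : Type*} [Field K] [AddCommGroup E] [Module K E] [AddCommGroup F] [Module K F]

theorem span_singleton_eq_of_eq_smul {x z : E} {a : K} (hz : z ≠ 0) (h : z = a • x) :
    K ∙ x = K ∙ z := by
  rw [h, span_singleton_smul_eq (isUnit_iff_ne_zero.mpr (left_ne_zero_of_smul (h ▸ hz)))]

theorem linearIndependent_pair_of_span_singleton_ne {x y : E} (hx : x ≠ 0) (hy : y ≠ 0)
    (h : K ∙ x ≠ K ∙ y) : LinearIndependent K ![x, y] := by
  rw [LinearIndependent.pair_iff' hx]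
  rintro a rfl
  exact h (span_singleton_eq_of_eq_smul hy rfl)

theorem coeffs_ne_zero_of_span_singleton_ne {x y z : E} {a b : K} (hz : z ≠ 0)
    (h : z = a • x + b • y) (hxz : K ∙ x ≠ K ∙ z) (hyz : K ∙ y ≠ K ∙ z) : a ≠ 0 ∧ b ≠ 0 := by
  constructor
  · rintro rfl
    exact hyz (span_singleton_eq_of_eq_smul hz (by simpa using h))
  · rintro rfl
    exact hxz (span_singleton_eq_of_eq_smul hz (by simpa using h))

theorem image_span_singleton {G : Type*} [FunLike G E F] [LinearMapClass G K E F] (f : G) (x : E) :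
    f '' (K ∙ x : Set E) = (K ∙ f x : Set F) := by
  simpa [map_span] using (map_coe (f : E →ₗ[K] F) (K ∙ x)).symm

theorem exists_linearEquiv_apply_eq_pair (hE : finrank K E = 2) (hF : finrank K F = 2)
    {x₁ x₂ : E} {y₁ y₂ : F} (hx : LinearIndependent K ![x₁, x₂])
    (hy : LinearIndependent K ![y₁, y₂]) : ∃ A : E ≃ₗ[K] F, A x₁ = y₁ ∧ A x₂ = y₂ := by
  let basisX := basisOfLinearIndependentOfCardEqFinrank hx (by simp [hE])
  let basisY := basisOfLinearIndependentOfCardEqFinrank hy (by simp [hF])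
  have hbasisX : ⇑basisX = ![x₁, x₂] := coe_basisOfLinearIndependentOfCardEqFinrank hx _
  have hbasisY : ⇑basisY = ![y₁, y₂] := coe_basisOfLinearIndependentOfCardEqFinrank hy _
  refine ⟨basisX.equiv basisY (Equiv.refl _), ?_, ?_⟩
  · simpa [hbasisX, hbasisY] using basisX.equiv_apply 0 basisY (Equiv.refl _)
  · simpa [hbasisX, hbasisY] using basisX.equiv_apply 1 basisY (Equiv.refl _)

theorem exists_linearEquiv_three_lines (hE : finrank K E = 2) (hF : finrank K F = 2)
    {w₁ w₂ w₃ : E} {v₁ v₂ v₃ : F} {b₁ b₂ c₁ c₂ : K}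
    (hw : LinearIndependent K ![w₁, w₂]) (hv : LinearIndependent K ![v₁, v₂])
    (hb₁ : b₁ ≠ 0) (hb₂ : b₂ ≠ 0) (hc₁ : c₁ ≠ 0) (hc₂ : c₂ ≠ 0)
    (hw3 : w₃ = b₁ • w₁ + b₂ • w₂) (hv3 : v₃ = c₁ • v₁ + c₂ • v₂) :
    ∃ A : E ≃ₗ[K] F, A w₁ = (c₁ / b₁) • v₁ ∧ A w₂ = (c₂ / b₂) • v₂ ∧ A w₃ = v₃ := by
  have hv' : LinearIndependent K ![(c₁ / b₁) • v₁, (c₂ / b₂) • v₂] :=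
    (LinearIndependent.pair_smul_smul_iff (isUnit_iff_ne_zero.mpr (div_ne_zero hc₁ hb₁))
      (isUnit_iff_ne_zero.mpr (div_ne_zero hc₂ hb₂))).mpr hv
  obtain ⟨A, hA₁, hA₂⟩ := exists_linearEquiv_apply_eq_pair hE hF hw hv'
  refine ⟨A, hA₁, hA₂, ?_⟩
  rw [hw3, map_add, map_smul, map_smul, hA₁, hA₂, smul_smul, smul_smul, mul_div_cancel₀ _ hb₁,
    mul_div_cancel₀ _ hb₂, hv3]

end LinearAlgebra

section Normed

variable {𝕜 E F : Type*} [NormedField 𝕜] [NormedAddCommGroup E] [NormedSpace 𝕜 E]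
  [NormedAddCommGroup F] [NormedSpace 𝕜 F]

theorem exists_norm_eq_one_smul_eq {v y : F} (hv : v ≠ 0) (hy : y ∈ 𝕜 ∙ v) (h : ‖y‖ = ‖v‖) :
    ∃ μ : 𝕜, ‖μ‖ = 1 ∧ μ • v = y := by
  obtain ⟨μ, rfl⟩ := mem_span_singleton.mp hy
  rw [norm_smul] at h
  exact ⟨μ, (mul_eq_right₀ (norm_ne_zero_iff.mpr hv)).mp h, rfl⟩

theorem norm_div_smul_of_norm_eq {b c : 𝕜} (h : ‖b‖ = ‖c‖) (hc : c ≠ 0) (v : F) :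
    ‖(c / b) • v‖ = ‖v‖ := by
  rw [norm_smul, norm_div, h, div_self (norm_ne_zero_iff.mpr hc), one_mul]

theorem norm_map_eq_of_mem_span_singleton {G : Type*} [FunLike G E F] [LinearMapClass G 𝕜 E F]
    {f : G} {w x : E} (h : ‖f w‖ = ‖w‖) (hx : x ∈ 𝕜 ∙ w) : ‖f x‖ = ‖x‖ := by
  obtain ⟨t, rfl⟩ := mem_span_singleton.mp hx
  rw [map_smul, norm_smul, norm_smul, h]

theorem norm_coeff_eq_of_norm_map_eq (B : E →ₗ[𝕜] F) {w₁ w₂ w₃ : E} {v₁ v₂ v₃ : F}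
    {b₁ b₂ c₁ c₂ : 𝕜} (hv : LinearIndependent 𝕜 ![v₁, v₂]) (hv₃ : v₃ ≠ 0)
    (hB₁ : B w₁ ∈ 𝕜 ∙ v₁) (hB₂ : B w₂ ∈ 𝕜 ∙ v₂) (hB₃ : B w₃ ∈ 𝕜 ∙ v₃)
    (hn₁ : ‖B w₁‖ = ‖v₁‖) (hn₂ : ‖B w₂‖ = ‖v₂‖) (hn₃ : ‖B w₃‖ = ‖v₃‖)
    (hw3 : w₃ = b₁ • w₁ + b₂ • w₂) (hv3 : v₃ = c₁ • v₁ + c₂ • v₂) :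
    ‖b₁‖ = ‖c₁‖ ∧ ‖b₂‖ = ‖c₂‖ := by
  obtain ⟨μ₁, hμ₁, hBμ₁⟩ := exists_norm_eq_one_smul_eq (by simpa using hv.ne_zero 0) hB₁ hn₁
  obtain ⟨μ₂, hμ₂, hBμ₂⟩ := exists_norm_eq_one_smul_eq (by simpa using hv.ne_zero 1) hB₂ hn₂
  obtain ⟨μ₃, hμ₃, hBμ₃⟩ := exists_norm_eq_one_smul_eq hv₃ hB₃ hn₃
  have key : (b₁ * μ₁) • v₁ + (b₂ * μ₂) • v₂ = (μ₃ * c₁) • v₁ + (μ₃ * c₂) • v₂ := by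
    rw [mul_smul, mul_smul, mul_smul, mul_smul, hBμ₁, hBμ₂, ← smul_add, ← hv3, hBμ₃,
      ← map_smul, ← map_smul, ← map_add, hw3]
  obtain ⟨h₁, h₂⟩ := hv.eq_of_pair key
  exact ⟨by simpa [hμ₁, hμ₃] using congrArg norm h₁, by simpa [hμ₂, hμ₃] using congrArg norm h₂⟩

end Normed
/-- Three lines in `ℂ²`: given unit vectors `v₁,v₂,v₃` and `w₁,w₂,w₃` spanning pairwise
distinct lines, with `w₃ = b₁w₁ + b₂w₂` and `v₃ = c₁v₁ + c₂v₂`: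
(1) there is an invertible linear map taking the union of the `w`-lines onto the union of
the `v`-lines with `A wᵢ ∈ span{vᵢ}`;
(2) there is a linear map with `A wᵢ ∈ span{vᵢ}` which is length preserving on the union of
the `w`-lines if and only if `|b₁| = |c₁|` and `|b₂| = |c₂|`. -/
theorem three_lines_example
    (v₁ v₂ v₃ w₁ w₂ w₃ : EuclideanSpace ℂ (Fin 2))
    (hv₁ : ‖v₁‖ = 1) (hv₂ : ‖v₂‖ = 1) (hv₃ : ‖v₃‖ = 1)
    (hw₁ : ‖w₁‖ = 1) (hw₂ : ‖w₂‖ = 1) (hw₃ : ‖w₃‖ = 1)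
    (hv12 : Submodule.span ℂ {v₁} ≠ Submodule.span ℂ {v₂})
    (hv13 : Submodule.span ℂ {v₁} ≠ Submodule.span ℂ {v₃})
    (hv23 : Submodule.span ℂ {v₂} ≠ Submodule.span ℂ {v₃})
    (hw12 : Submodule.span ℂ {w₁} ≠ Submodule.span ℂ {w₂})
    (hw13 : Submodule.span ℂ {w₁} ≠ Submodule.span ℂ {w₃})
    (hw23 : Submodule.span ℂ {w₂} ≠ Submodule.span ℂ {w₃})
    (b₁ b₂ c₁ c₂ : ℂ)
    (hw3 : w₃ = b₁ • w₁ + b₂ • w₂) (hv3 : v₃ = c₁ • v₁ + c₂ • v₂) :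
    (∃ A : EuclideanSpace ℂ (Fin 2) ≃ₗ[ℂ] EuclideanSpace ℂ (Fin 2),
      A '' ((Submodule.span ℂ {w₁} : Set (EuclideanSpace ℂ (Fin 2))) ∪
            (Submodule.span ℂ {w₂} : Set (EuclideanSpace ℂ (Fin 2))) ∪
            (Submodule.span ℂ {w₃} : Set (EuclideanSpace ℂ (Fin 2)))) =
          ((Submodule.span ℂ {v₁} : Set (EuclideanSpace ℂ (Fin 2))) ∪
            (Submodule.span ℂ {v₂} : Set (EuclideanSpace ℂ (Fin 2))) ∪
            (Submodule.span ℂ {v₃} : Set (EuclideanSpace ℂ (Fin 2)))) ∧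
      A w₁ ∈ Submodule.span ℂ {v₁} ∧ A w₂ ∈ Submodule.span ℂ {v₂} ∧
      A w₃ ∈ Submodule.span ℂ {v₃}) ∧
    ((∃ A : EuclideanSpace ℂ (Fin 2) →ₗ[ℂ] EuclideanSpace ℂ (Fin 2),
      (A w₁ ∈ Submodule.span ℂ {v₁} ∧ A w₂ ∈ Submodule.span ℂ {v₂} ∧
        A w₃ ∈ Submodule.span ℂ {v₃}) ∧
      ∀ x ∈ ((Submodule.span ℂ {w₁} : Set (EuclideanSpace ℂ (Fin 2))) ∪
              (Submodule.span ℂ {w₂} : Set (EuclideanSpace ℂ (Fin 2))) ∪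
              (Submodule.span ℂ {w₃} : Set (EuclideanSpace ℂ (Fin 2)))),
        ‖A x‖ = ‖x‖) ↔
      (‖b₁‖ = ‖c₁‖ ∧ ‖b₂‖ = ‖c₂‖)) := by
  have ne_zero {x : EuclideanSpace ℂ (Fin 2)} (hx : ‖x‖ = 1) : x ≠ 0 :=
    norm_ne_zero_iff.mp (hx ▸ one_ne_zero)
  have hw := linearIndependent_pair_of_span_singleton_ne (ne_zero hw₁) (ne_zero hw₂) hw12
  have hv := linearIndependent_pair_of_span_singleton_ne (ne_zero hv₁) (ne_zero hv₂) hv12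
  obtain ⟨hb₁, hb₂⟩ := coeffs_ne_zero_of_span_singleton_ne (ne_zero hw₃) hw3 hw13 hw23
  obtain ⟨hc₁, hc₂⟩ := coeffs_ne_zero_of_span_singleton_ne (ne_zero hv₃) hv3 hv13 hv23
  obtain ⟨A, hA₁, hA₂, hA₃⟩ :=
    exists_linearEquiv_three_lines (by simp) (by simp) hw hv hb₁ hb₂ hc₁ hc₂ hw3 hv3
  have hA : A w₁ ∈ ℂ ∙ v₁ ∧ A w₂ ∈ ℂ ∙ v₂ ∧ A w₃ ∈ ℂ ∙ v₃ :=
    ⟨hA₁ ▸ smul_mem _ _ (mem_span_singleton_self v₁),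
      hA₂ ▸ smul_mem _ _ (mem_span_singleton_self v₂), by rw [hA₃]; exact mem_span_singleton_self v₃⟩
  refine ⟨⟨A, ?_, hA⟩, ?_, ?_⟩
  · simp only [Set.image_union, image_span_singleton, hA₁, hA₂, hA₃,
      span_singleton_smul_eq (isUnit_iff_ne_zero.mpr (div_ne_zero hc₁ hb₁)),
      span_singleton_smul_eq (isUnit_iff_ne_zero.mpr (div_ne_zero hc₂ hb₂))]
  · rintro ⟨B, ⟨hB₁, hB₂, hB₃⟩, hB⟩
    exact norm_coeff_eq_of_norm_map_eq B hv (ne_zero hv₃) hB₁ hB₂ hB₃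
      (by rw [hB w₁ (by simp), hw₁, hv₁]) (by rw [hB w₂ (by simp), hw₂, hv₂])
      (by rw [hB w₃ (by simp), hw₃, hv₃]) hw3 hv3
  · rintro ⟨h₁, h₂⟩
    refine ⟨A, hA, ?_⟩
    rintro x ((hx | hx) | hx)
    · exact norm_map_eq_of_mem_span_singleton (by rw [LinearEquiv.coe_coe, hA₁,
        norm_div_smul_of_norm_eq h₁ hc₁, hv₁, hw₁]) hx
    · exact norm_map_eq_of_mem_span_singleton (by rw [LinearEquiv.coe_coe, hA₂,
        norm_div_smul_of_norm_eq h₂ hc₂, hv₂, hw₂]) hx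
    · exact norm_map_eq_of_mem_span_singleton (by rw [LinearEquiv.coe_coe, hA₃, hv₃, hw₃]) hx
end
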